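/- arXiv:2409.03660 — 5 statements merged into one kernel-verified Lean document; each statement's English description precedes it below -/
import Mathlib

section
/- Let Ω ⊂ ℝⁿ be a domain, τ ≥ 1, and let p(·) be an exponent function on Ω with 1 ≤ p_- ≤ p_+ < ∞. Then the following are equivalent: (a) p(·) ∈ ∂LH_0^τ(Ω); (b) there is a constant C such that |B_{x,τ}|^{−(p(y) − p_-(B_{x,τ}))} ≤ C for every x ∈ Ω and almost every y ∈ B_{x,τ} ∩ Ω; (c) there is a constant C such that |B_{x,τ}|^{−(p_+(B_{x,τ}) − p_-(B_{x,τ}))} ≤ C for every x ∈ Ω. Here |B_{x,τ}| denotes the Lebesgue measure of the full ball B(x, τ d(x)) in ℝⁿ. -/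
open MeasureTheory Metric Set Filter Topology

set_option maxHeartbeats 1000000
noncomputable section

abbrev Eucl (n : ℕ) : Type := EuclideanSpace ℝ (Fin n)

/-- Essential supremum of `p` over the set `A` (w.r.t. Lebesgue measure). -/
def essSupOn {n : ℕ} (p : Eucl n → ℝ) (A : Set (Eucl n)) : ℝ :=
  essSup p (volume.restrict A)

/-- Essential infimum of `p` over the set `A` (w.r.t. Lebesgue measure). -/
def essInfOn {n : ℕ} (p : Eucl n → ℝ) (A : Set (Eucl n)) : ℝ :=
  essInf p (volume.restrict A)

/-- The Luxemburg norm of `f` on `A` with variable exponent `p`. -/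
def luxNorm {n : ℕ} (A : Set (Eucl n)) (p f : Eucl n → ℝ) : ℝ :=
  sInf {l : ℝ | 0 < l ∧ (∫⁻ x in A, ENNReal.ofReal ((|f x| / l) ^ (p x))) ≤ 1}

/-- `f` belongs to the variable Lebesgue space `L^{p(·)}(A)`. -/
def MemVarLp {n : ℕ} (A : Set (Eucl n)) (p f : Eucl n → ℝ) : Prop :=
  ∃ l : ℝ, 0 < l ∧ (∫⁻ x in A, ENNReal.ofReal ((|f x| / l) ^ (p x))) ≤ 1

/-- `d(x) = dist(x, ∂Ω)`. -/
def bdist {n : ℕ} (Ω : Set (Eucl n)) (x : Eucl n) : ℝ :=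
  infDist x (frontier Ω)

/-- The ball `B_{x,τ} = B(x, τ d(x))`. -/
def ballB {n : ℕ} (Ω : Set (Eucl n)) (τ : ℝ) (x : Eucl n) : Set (Eucl n) :=
  ball x (τ * bdist Ω x)

/-- The boundary log-Hölder condition `∂LH₀^τ(Ω)` with constant `C₀`. -/
def BoundaryLH {n : ℕ} (Ω : Set (Eucl n)) (p : Eucl n → ℝ) (τ C₀ : ℝ) : Prop :=
  ∀ x ∈ Ω, τ * bdist Ω x ≤ 1 / 2 →
    essSupOn p (ballB Ω τ x ∩ Ω) - essInfOn p (ballB Ω τ x ∩ Ω)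
      ≤ C₀ / (-Real.log (τ * bdist Ω x))

/-- `Ω` is a John domain with parameter `lam`. -/
def JohnDomain {n : ℕ} (Ω : Set (Eucl n)) (lam : ℝ) : Prop :=
  ∃ x₀ ∈ Ω, ∀ y ∈ Ω, ∃ ℓ : ℝ, 0 ≤ ℓ ∧ ∃ γ : ℝ → Eucl n,
    γ 0 = y ∧ γ ℓ = x₀ ∧ (∀ t ∈ Icc (0:ℝ) ℓ, γ t ∈ Ω) ∧
    LipschitzOnWith 1 γ (Icc (0:ℝ) ℓ) ∧
    ∀ t ∈ Icc (0:ℝ) ℓ, t ≤ lam * infDist (γ t) (frontier Ω)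

/-- `g` is uniformly `ε`-continuous on `S`. -/
def UnifEpsCont {n : ℕ} (S : Set (Eucl n)) (g : Eucl n → ℝ) (ε : ℝ) : Prop :=
  ∃ δ : ℝ, 0 < δ ∧ ∀ x ∈ S, ∀ y ∈ S, dist x y < δ → |g y - g x| < ε

/-- `f` is locally Lipschitz on `S`. -/
def LocLipschitzOn {n : ℕ} (S : Set (Eucl n)) (f : Eucl n → ℝ) : Prop :=
  ∀ x ∈ S, ∃ K : NNReal, ∃ t ∈ 𝓝 x, LipschitzOnWith K f (t ∩ S)

/-- The average of `f` over `A`. -/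
def avgOn {n : ℕ} (A : Set (Eucl n)) (f : Eucl n → ℝ) : ℝ :=
  (volume A).toReal⁻¹ * ∫ x in A, f x

/-- The pointwise dual (conjugate) exponent `p'`, `1/p + 1/p' = 1`. -/
def dualExp {α : Type*} (p : α → ℝ) : α → ℝ :=
  fun x => p x / (p x - 1)

/-- The norm of the a.e.-defined gradient of `f`. -/
def gradNorm {n : ℕ} (f : Eucl n → ℝ) : Eucl n → ℝ :=
  fun x => ‖fderiv ℝ f x‖

lemma essSup_zero_real {α : Type*} [MeasurableSpace α] (f : α → ℝ) :
    essSup f (0 : Measure α) = 0 := by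
  rw [essSup_eq_sInf]
  have h : {a : ℝ | (0 : Measure α) {x | a < f x} = 0} = Set.univ := by
    ext a; simp
  rw [h]
  exact Real.sInf_of_not_bddBelow not_bddBelow_univ

lemma essInf_zero_real {α : Type*} [MeasurableSpace α] (f : α → ℝ) :
    essInf f (0 : Measure α) = 0 := by
  rw [essInf_eq_sSup]
  have h : {a : ℝ | (0 : Measure α) {x | f x < a} = 0} = Set.univ := by
    ext a; simp
  rw [h]
  exact Real.sSup_of_not_bddAbove not_bddAbove_univ

lemma ball_bdist_subset {n : ℕ} {Ω : Set (Eucl n)} (hΩo : IsOpen Ω) {x : Eucl n} (hx : x ∈ Ω) :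
    ball x (bdist Ω x) ⊆ Ω := by
  rcases le_or_gt (bdist Ω x) 0 with h0 | h0
  · rw [ball_eq_empty.2 h0]; exact empty_subset _
  have hdisj : ∀ y ∈ ball x (bdist Ω x), y ∉ frontier Ω := by
    intro y hy hyF
    have h1 : infDist x (frontier Ω) ≤ dist x y := infDist_le_dist_of_mem hyF
    rw [mem_ball, dist_comm] at hy
    exact absurd h1 (not_le.2 hy)
  have hsub : ball x (bdist Ω x) ⊆ Ω ∪ (closure Ω)ᶜ := by
    intro y hy
    by_contra h
    rcases not_or.1 h with ⟨h1, h2⟩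
    exact hdisj y hy ⟨not_not.1 h2, by rw [hΩo.interior_eq]; exact h1⟩
  have hpre : IsPreconnected (ball x (bdist Ω x)) := (convex_ball x (bdist Ω x)).isPreconnected
  have := hpre.subset_left_of_subset_union hΩo (isOpen_compl_iff.2 isClosed_closure)
    (disjoint_compl_right.mono_left subset_closure) hsub
    ⟨x, mem_ball_self h0, hx⟩
  exact this

lemma rpow_neg_le_of_lb {c a e D : ℝ} (hc : 0 < c) (hca : c ≤ a) (he : 0 ≤ e) (heD : e ≤ D) :
    a ^ (-e) ≤ Real.exp (D * max 0 (-Real.log c)) := by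
  have ha : 0 < a := lt_of_lt_of_le hc hca
  have hD : 0 ≤ D := le_trans he heD
  rw [Real.rpow_def_of_pos ha]
  apply Real.exp_le_exp.2
  have hmax0 : 0 ≤ max 0 (-Real.log c) := le_max_left _ _
  rcases le_or_gt 0 (Real.log a) with h | h
  · nlinarith [mul_nonneg hD hmax0, mul_nonneg he h]
  · have hlc : Real.log c ≤ Real.log a := Real.log_le_log hc hca
    have h1 : -Real.log a ≤ max 0 (-Real.log c) := le_trans (by linarith) (le_max_right _ _)
    nlinarith [mul_nonneg (sub_nonneg.2 heD) (neg_nonneg.2 h.le),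
      mul_nonneg hD (sub_nonneg.2 h1)]

/-- Lemma 2.5, equivalent formulations of the boundary log-Hölder condition. -/
theorem boundaryLH_equiv
    (n : ℕ) (Ω : Set (Eucl n)) (hΩo : IsOpen Ω) (hΩc : IsConnected Ω)
    (τ : ℝ) (hτ : 1 ≤ τ)
    (p : Eucl n → ℝ) (hpm : Measurable p) (hp1 : ∀ x ∈ Ω, 1 ≤ p x)
    (hpb : ∃ M : ℝ, ∀ᵐ x ∂(volume.restrict Ω), p x ≤ M) :
    ((∃ C₀ : ℝ, 0 < C₀ ∧ BoundaryLH Ω p τ C₀) ↔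
      (∃ C : ℝ, ∀ x ∈ Ω, ∀ᵐ y ∂(volume.restrict (ballB Ω τ x ∩ Ω)),
        (volume (ballB Ω τ x)).toReal ^ (-(p y - essInfOn p (ballB Ω τ x ∩ Ω))) ≤ C)) ∧
    ((∃ C₀ : ℝ, 0 < C₀ ∧ BoundaryLH Ω p τ C₀) ↔
      (∃ C : ℝ, ∀ x ∈ Ω,
        (volume (ballB Ω τ x)).toReal ^
          (-(essSupOn p (ballB Ω τ x ∩ Ω) - essInfOn p (ballB Ω τ x ∩ Ω))) ≤ C)) := by
  rcases eq_empty_or_nonempty (frontier Ω) with hF | hF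
  · -- Degenerate case: the frontier is empty, so every `B_{x,τ}` is empty.
    have hb0 : ∀ x : Eucl n, bdist Ω x = 0 := fun x => by
      rw [bdist, hF, infDist_empty]
    have hbe : ∀ x : Eucl n, ballB Ω τ x = ∅ := fun x => by
      rw [ballB, hb0, mul_zero, ball_zero]
    have hA : ∃ C₀ : ℝ, 0 < C₀ ∧ BoundaryLH Ω p τ C₀ := by
      refine ⟨1, one_pos, fun x hx h2 => ?_⟩
      simp only [essSupOn, essInfOn]
      rw [hbe x, Set.empty_inter, Measure.restrict_empty, essSup_zero_real, essInf_zero_real,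
        hb0 x, mul_zero, Real.log_zero, neg_zero, div_zero, sub_zero]
    have hB : ∃ C : ℝ, ∀ x ∈ Ω, ∀ᵐ y ∂(volume.restrict (ballB Ω τ x ∩ Ω)),
        (volume (ballB Ω τ x)).toReal ^ (-(p y - essInfOn p (ballB Ω τ x ∩ Ω))) ≤ C := by
      refine ⟨1, fun x hx => ?_⟩
      rw [hbe x, Set.empty_inter, Measure.restrict_empty]
      simp [ae_zero]
    have hC : ∃ C : ℝ, ∀ x ∈ Ω,
        (volume (ballB Ω τ x)).toReal ^
          (-(essSupOn p (ballB Ω τ x ∩ Ω) - essInfOn p (ballB Ω τ x ∩ Ω))) ≤ C := by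
      refine ⟨1, fun x hx => ?_⟩
      simp only [essSupOn, essInfOn]
      rw [hbe x, Set.empty_inter, Measure.restrict_empty, essSup_zero_real, essInf_zero_real,
        measure_empty]
      norm_num
    exact ⟨iff_of_true hA hB, iff_of_true hA hC⟩
  · -- Main case: the frontier is nonempty.
    obtain ⟨M, hMae⟩ := hpb
    have hM1 : (1 : ℝ) ≤ M := by
      haveI : (ae (volume.restrict Ω)).NeBot := by
        refine ae_neBot.2 fun h => ?_
        exact (hΩo.measure_pos volume hΩc.nonempty).ne' (Measure.restrict_eq_zero.1 h)
      obtain ⟨y, hy1, hy2⟩ := ((ae_restrict_mem hΩo.measurableSet).and hMae).exists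
      exact le_trans (hp1 y hy1) hy2
    have hn : 1 ≤ (n : ℝ) := by
      rcases Nat.eq_zero_or_pos n with h0 | h1
      · exfalso
        subst h0
        haveI : Subsingleton (Eucl 0) := ⟨fun a b => by ext i; exact i.elim0⟩
        have huniv : Ω = Set.univ := hΩc.nonempty.eq_univ
        rw [huniv, frontier_univ] at hF
        exact Set.not_nonempty_empty hF
      · exact_mod_cast h1
    set ω := (volume (ball (0 : Eucl n) 1)).toReal with hωdef
    have hω : 0 < ω := ENNReal.toReal_pos (measure_ball_pos volume _ one_pos).ne'
      measure_ball_lt_top.ne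
    have hdpos : ∀ x ∈ Ω, 0 < bdist Ω x := by
      intro x hx
      rw [bdist]
      refine (isClosed_frontier.notMem_iff_infDist_pos hF).1 ?_
      intro hxf
      exact hxf.2 (by rw [hΩo.interior_eq]; exact hx)
    have hτ0 : (0 : ℝ) < τ := lt_of_lt_of_le one_pos hτ
    have hrpos : ∀ x ∈ Ω, 0 < τ * bdist Ω x := fun x hx => mul_pos hτ0 (hdpos x hx)
    have hSsub : ∀ x ∈ Ω, ball x (bdist Ω x) ⊆ ballB Ω τ x ∩ Ω := by
      intro x hx
      exact Set.subset_inter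
        (ball_subset_ball (le_mul_of_one_le_left (hdpos x hx).le hτ))
        (ball_bdist_subset hΩo hx)
    have hSne : ∀ x ∈ Ω, volume.restrict (ballB Ω τ x ∩ Ω) ≠ 0 := by
      intro x hx h
      have h2 : volume (ballB Ω τ x ∩ Ω) = 0 := Measure.restrict_eq_zero.1 h
      have h3 : (0 : ENNReal) < volume (ball x (bdist Ω x)) :=
        measure_ball_pos volume x (hdpos x hx)
      exact absurd (le_trans (measure_mono (hSsub x hx)) h2.le) (not_le.2 h3)
    have hvol : ∀ x ∈ Ω, (volume (ballB Ω τ x)).toReal = (τ * bdist Ω x) ^ n * ω := by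
      intro x hx
      have h : volume (ballB Ω τ x) = ENNReal.ofReal ((τ * bdist Ω x) ^ Module.finrank ℝ (Eucl n)) *
          volume (ball (0 : Eucl n) 1) := Measure.addHaar_ball_of_pos (μ := volume) x (hrpos x hx)
      rw [h, finrank_euclideanSpace_fin, ENNReal.toReal_mul,
        ENNReal.toReal_ofReal (pow_nonneg (hrpos x hx).le n)]
    have hvolpos : ∀ x ∈ Ω, 0 < (volume (ballB Ω τ x)).toReal := by
      intro x hx; rw [hvol x hx]; exact mul_pos (pow_pos (hrpos x hx) n) hω
    have hae : ∀ x ∈ Ω, ∀ᵐ y ∂(volume.restrict (ballB Ω τ x ∩ Ω)), 1 ≤ p y ∧ p y ≤ M := by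
      intro x hx
      have hms : MeasurableSet (ballB Ω τ x ∩ Ω) :=
        measurableSet_ball.inter hΩo.measurableSet
      have h1 : ∀ᵐ y ∂(volume.restrict (ballB Ω τ x ∩ Ω)), y ∈ ballB Ω τ x ∩ Ω :=
        ae_restrict_mem hms
      have h2 : ∀ᵐ y ∂(volume.restrict (ballB Ω τ x ∩ Ω)), p y ≤ M :=
        hMae.filter_mono (ae_mono (Measure.restrict_mono Set.inter_subset_right le_rfl))
      filter_upwards [h1, h2] with y hy hy2
      exact ⟨hp1 y hy.2, hy2⟩
    have hsupinf : ∀ x ∈ Ω, 1 ≤ essInfOn p (ballB Ω τ x ∩ Ω) ∧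
        essSupOn p (ballB Ω τ x ∩ Ω) ≤ M ∧
        (∀ᵐ y ∂(volume.restrict (ballB Ω τ x ∩ Ω)),
          essInfOn p (ballB Ω τ x ∩ Ω) ≤ p y ∧ p y ≤ essSupOn p (ballB Ω τ x ∩ Ω)) := by
      intro x hx
      haveI : (ae (volume.restrict (ballB Ω τ x ∩ Ω))).NeBot := ae_neBot.2 (hSne x hx)
      have hb := hae x hx
      have hbdd1 : IsBoundedUnder (· ≤ ·) (ae (volume.restrict (ballB Ω τ x ∩ Ω))) p :=
        ⟨M, eventually_map.2 (hb.mono fun y h => h.2)⟩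
      have hbdd2 : IsBoundedUnder (· ≥ ·) (ae (volume.restrict (ballB Ω τ x ∩ Ω))) p :=
        ⟨1, eventually_map.2 (hb.mono fun y h => h.1)⟩
      refine ⟨?_, ?_, ?_⟩
      · exact le_liminf_of_le hbdd1.isCoboundedUnder_ge (hb.mono fun y h => h.1)
      · exact limsup_le_of_le hbdd2.isCoboundedUnder_le (hb.mono fun y h => h.2)
      · exact (ae_essInf_le hbdd2).and (ae_le_essSup hbdd1)
    -- (a) → (b)
    have hAB : (∃ C₀ : ℝ, 0 < C₀ ∧ BoundaryLH Ω p τ C₀) →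
        (∃ C : ℝ, ∀ x ∈ Ω, ∀ᵐ y ∂(volume.restrict (ballB Ω τ x ∩ Ω)),
          (volume (ballB Ω τ x)).toReal ^ (-(p y - essInfOn p (ballB Ω τ x ∩ Ω))) ≤ C) := by
      rintro ⟨C₀, hC₀, hLH⟩
      refine ⟨Real.exp ((M - 1) * max 0 (-Real.log ((1 / 2 : ℝ) ^ n * ω))) +
        Real.exp ((M - 1) * |Real.log ω| + n * C₀), fun x hx => ?_⟩
      obtain ⟨hinf1, hsupM, haeb⟩ := hsupinf x hx
      have hr : 0 < τ * bdist Ω x := hrpos x hx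
      have hvx := hvol x hx
      have hLHx : ∀ hh : τ * bdist Ω x ≤ 1 / 2,
          essSupOn p (ballB Ω τ x ∩ Ω) - essInfOn p (ballB Ω τ x ∩ Ω)
            ≤ C₀ / (-Real.log (τ * bdist Ω x)) := fun hh => hLH x hx hh
      set r := τ * bdist Ω x with hrdef
      set pm := essInfOn p (ballB Ω τ x ∩ Ω) with hpmdef
      set pM := essSupOn p (ballB Ω τ x ∩ Ω) with hpMdef
      filter_upwards [hae x hx, haeb] with y hy hyb
      obtain ⟨hy1, hyM⟩ := hy
      obtain ⟨hyi, hys⟩ := hyb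
      have he0 : 0 ≤ p y - pm := by linarith
      have heD : p y - pm ≤ M - 1 := by linarith
      rw [hvx]
      have hapos : (0 : ℝ) < r ^ n * ω := mul_pos (pow_pos hr n) hω
      rcases le_or_gt r (1 / 2) with hhalf | hhalf
      · have hlogr : 0 < -Real.log r := by
          have := Real.log_neg hr (lt_of_le_of_lt hhalf (by norm_num))
          linarith
        have hδ' : (pM - pm) * (-Real.log r) ≤ C₀ := (le_div_iff₀ hlogr).1 (hLHx hhalf)
        have hes : (p y - pm) * (-Real.log r) ≤ C₀ := by
          have h1 : p y - pm ≤ pM - pm := by linarith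
          nlinarith [mul_le_mul_of_nonneg_right h1 hlogr.le]
        have hlog : Real.log (r ^ n * ω) = n * Real.log r + Real.log ω := by
          rw [Real.log_mul (pow_pos hr n).ne' hω.ne', Real.log_pow]
        have hexp : Real.log (r ^ n * ω) * (-(p y - pm)) ≤ (M - 1) * |Real.log ω| + n * C₀ := by
          rw [hlog]
          have h1 : (-Real.log ω) * (p y - pm) ≤ (M - 1) * |Real.log ω| := by
            nlinarith [le_abs_self (-Real.log ω), abs_neg (Real.log ω), abs_nonneg (Real.log ω),
              mul_nonneg he0 (sub_nonneg.2 (le_abs_self (-Real.log ω))),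
              mul_nonneg (sub_nonneg.2 heD) (abs_nonneg (Real.log ω))]
          have h2 : (n : ℝ) * ((p y - pm) * (-Real.log r)) ≤ n * C₀ :=
            mul_le_mul_of_nonneg_left hes (by positivity)
          nlinarith [h1, h2]
        calc (r ^ n * ω) ^ (-(p y - pm))
            = Real.exp (Real.log (r ^ n * ω) * (-(p y - pm))) :=
              Real.rpow_def_of_pos hapos _
          _ ≤ Real.exp ((M - 1) * |Real.log ω| + n * C₀) := Real.exp_le_exp.2 hexp
          _ ≤ _ := le_add_of_nonneg_left (Real.exp_pos _).le
      · have hc : (1 / 2 : ℝ) ^ n * ω ≤ r ^ n * ω := by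
          have h2 : (1 / 2 : ℝ) ^ n ≤ r ^ n := pow_le_pow_left₀ (by norm_num) hhalf.le n
          nlinarith [hω.le]
        have hcpos : (0 : ℝ) < (1 / 2 : ℝ) ^ n * ω := by positivity
        exact le_trans (rpow_neg_le_of_lb hcpos hc he0 heD)
          (le_add_of_nonneg_right (Real.exp_pos _).le)
    -- (b) → (c)
    have hBC : (∃ C : ℝ, ∀ x ∈ Ω, ∀ᵐ y ∂(volume.restrict (ballB Ω τ x ∩ Ω)),
          (volume (ballB Ω τ x)).toReal ^ (-(p y - essInfOn p (ballB Ω τ x ∩ Ω))) ≤ C) →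
        (∃ C : ℝ, ∀ x ∈ Ω,
          (volume (ballB Ω τ x)).toReal ^
            (-(essSupOn p (ballB Ω τ x ∩ Ω) - essInfOn p (ballB Ω τ x ∩ Ω))) ≤ C) := by
      rintro ⟨C, hC⟩
      refine ⟨max C 1, fun x hx => ?_⟩
      haveI : (ae (volume.restrict (ballB Ω τ x ∩ Ω))).NeBot := ae_neBot.2 (hSne x hx)
      obtain ⟨hinf1, hsupM, haeb⟩ := hsupinf x hx
      have hb := hae x hx
      have hCx := hC x hx
      have hapos : 0 < (volume (ballB Ω τ x)).toReal := hvolpos x hx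
      have hCpos : 0 < C := by
        obtain ⟨y, hy⟩ := hCx.exists
        exact lt_of_lt_of_le (Real.rpow_pos_of_pos hapos _) hy
      have hδ0 : 0 ≤ essSupOn p (ballB Ω τ x ∩ Ω) - essInfOn p (ballB Ω τ x ∩ Ω) := by
        obtain ⟨y, hy1, hy2⟩ := haeb.exists
        linarith
      rcases le_or_gt 0 (Real.log ((volume (ballB Ω τ x)).toReal)) with hla | hla
      · have h1a : 1 ≤ (volume (ballB Ω τ x)).toReal := (Real.log_nonneg_iff hapos).1 hla
        exact le_trans (Real.rpow_le_one_of_one_le_of_nonpos h1a (by linarith))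
          (le_max_right _ _)
      · have hml : 0 < -Real.log ((volume (ballB Ω τ x)).toReal) := by linarith
        have hsup : essSupOn p (ballB Ω τ x ∩ Ω) ≤ essInfOn p (ballB Ω τ x ∩ Ω) +
            Real.log C / (-Real.log ((volume (ballB Ω τ x)).toReal)) := by
          refine limsup_le_of_le (IsBoundedUnder.isCoboundedUnder_le
            ⟨1, eventually_map.2 ((hae x hx).mono fun y h => h.1)⟩) ?_
          filter_upwards [hCx] with y hy
          have hlog := Real.log_le_log (Real.rpow_pos_of_pos hapos _) hy
          rw [Real.log_rpow hapos] at hlog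
          have h2 : (p y - essInfOn p (ballB Ω τ x ∩ Ω)) *
              (-Real.log ((volume (ballB Ω τ x)).toReal)) ≤ Real.log C := by nlinarith [hlog]
          have h3 := (le_div_iff₀ hml).2 h2
          linarith
        have h4 : (essSupOn p (ballB Ω τ x ∩ Ω) - essInfOn p (ballB Ω τ x ∩ Ω)) *
            (-Real.log ((volume (ballB Ω τ x)).toReal)) ≤ Real.log C :=
          (le_div_iff₀ hml).1 (by linarith)
        have h5 : Real.log ((volume (ballB Ω τ x)).toReal) *
            (-(essSupOn p (ballB Ω τ x ∩ Ω) - essInfOn p (ballB Ω τ x ∩ Ω))) ≤ Real.log C := by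
          nlinarith [h4]
        calc (volume (ballB Ω τ x)).toReal ^
              (-(essSupOn p (ballB Ω τ x ∩ Ω) - essInfOn p (ballB Ω τ x ∩ Ω)))
            = Real.exp (Real.log ((volume (ballB Ω τ x)).toReal) *
              (-(essSupOn p (ballB Ω τ x ∩ Ω) - essInfOn p (ballB Ω τ x ∩ Ω)))) :=
              Real.rpow_def_of_pos hapos _
          _ ≤ Real.exp (Real.log C) := Real.exp_le_exp.2 h5
          _ = C := Real.exp_log hCpos
          _ ≤ max C 1 := le_max_left _ _
    -- (c) → (a)
    have hCA : (∃ C : ℝ, ∀ x ∈ Ω,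
          (volume (ballB Ω τ x)).toReal ^
            (-(essSupOn p (ballB Ω τ x ∩ Ω) - essInfOn p (ballB Ω τ x ∩ Ω))) ≤ C) →
        (∃ C₀ : ℝ, 0 < C₀ ∧ BoundaryLH Ω p τ C₀) := by
      rintro ⟨C, hC⟩
      have hCpos : 0 < C := by
        obtain ⟨x, hx⟩ := hΩc.nonempty
        exact lt_of_lt_of_le (Real.rpow_pos_of_pos (hvolpos x hx) _) (hC x hx)
      refine ⟨max (Real.log C + (M - 1) * |Real.log ω|) 1,
        lt_of_lt_of_le one_pos (le_max_right _ _), ?_⟩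
      intro x hx hhalf
      obtain ⟨hinf1, hsupM, haeb⟩ := hsupinf x hx
      haveI : (ae (volume.restrict (ballB Ω τ x ∩ Ω))).NeBot := ae_neBot.2 (hSne x hx)
      have hδ0 : 0 ≤ essSupOn p (ballB Ω τ x ∩ Ω) - essInfOn p (ballB Ω τ x ∩ Ω) := by
        obtain ⟨y, hy1, hy2⟩ := haeb.exists
        linarith
      have hδM : essSupOn p (ballB Ω τ x ∩ Ω) - essInfOn p (ballB Ω τ x ∩ Ω) ≤ M - 1 := by
        linarith
      have hr : 0 < τ * bdist Ω x := hrpos x hx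
      have hlogr : 0 < -Real.log (τ * bdist Ω x) := by
        have := Real.log_neg hr (lt_of_le_of_lt hhalf (by norm_num))
        linarith
      have hkey := hC x hx
      rw [hvol x hx] at hkey
      have hapos : 0 < (τ * bdist Ω x) ^ n * ω := mul_pos (pow_pos hr n) hω
      have hlog := Real.log_le_log (Real.rpow_pos_of_pos hapos _) hkey
      rw [Real.log_rpow hapos, Real.log_mul (pow_pos hr n).ne' hω.ne', Real.log_pow] at hlog
      set dd := essSupOn p (ballB Ω τ x ∩ Ω) - essInfOn p (ballB Ω τ x ∩ Ω) with hdd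
      rw [le_div_iff₀ hlogr]
      have h1 : dd * ((n : ℝ) * (-Real.log (τ * bdist Ω x))) ≤
          Real.log C + dd * Real.log ω := by nlinarith [hlog]
      have h2 : dd * Real.log ω ≤ (M - 1) * |Real.log ω| := by
        nlinarith [le_abs_self (Real.log ω), abs_nonneg (Real.log ω),
          mul_nonneg hδ0 (sub_nonneg.2 (le_abs_self (Real.log ω))),
          mul_nonneg (sub_nonneg.2 hδM) (abs_nonneg (Real.log ω))]
      have h3 : dd * (-Real.log (τ * bdist Ω x)) ≤
          dd * ((n : ℝ) * (-Real.log (τ * bdist Ω x))) := by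
        nlinarith [mul_nonneg (mul_nonneg hδ0 (sub_nonneg.2 hn)) hlogr.le]
      have h4 := le_max_left (Real.log C + (M - 1) * |Real.log ω|) 1
      linarith [h1, h2, h3, h4]
    exact ⟨⟨hAB, fun h => hCA (hBC h)⟩, ⟨fun h => hBC (hAB h), hCA⟩⟩
end
end

section
/- Let Ω ⊂ ℝⁿ be a bounded domain and let p(·) be an exponent function with 1 ≤ p_- ≤ p_+ < ∞. If p(·) ∈ ∂LH_0^τ(Ω) for some τ ≥ 1, then the averaging operators A_B f(y) = (χ_B(y)/|B|) ∫_{B∩Ω} f(z) dz, taken over all balls B = B_{x,τ} = B(x, τ d(x)) with x ∈ Ω, are uniformly bounded on L^{p(·)}(Ω): there is a constant C, independent of x, such that ‖A_{B_{x,τ}} f‖_{L^{p(·)}(Ω)} ≤ C ‖f‖_{L^{p(·)}(Ω)} for all f ∈ L^{p(·)}(Ω) and all x ∈ Ω. -/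
open MeasureTheory Metric Set Filter Topology

noncomputable section

/-- The averaging operator `A_B` over `B = B_{x,τ}` (Lemma 4.3/4.4). -/
def avgOpB {n : ℕ} (Ω : Set (Eucl n)) (τ : ℝ) (x : Eucl n)
    (f : Eucl n → ℝ) : Eucl n → ℝ :=
  Set.indicator (ballB Ω τ x)
    (fun _ => (volume (ballB Ω τ x)).toReal⁻¹ * ∫ z in ballB Ω τ x ∩ Ω, f z)

open scoped ENNReal NNReal

section AuxLemmas

lemma aux_split {g t q pv : ℝ} (hg : 0 ≤ g) (ht : 1 ≤ t) (hq : 1 ≤ q) (hpv : q ≤ pv) :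
    g ≤ t + t ^ (1 - q) * g ^ pv := by
  rcases le_or_gt g t with h | h
  · have h1 : (0:ℝ) ≤ t ^ (1-q) * g ^ pv :=
      mul_nonneg (Real.rpow_nonneg (by linarith) _) (Real.rpow_nonneg hg _)
    linarith
  · have ht0 : (0:ℝ) < t := by linarith
    have hg1 : (1:ℝ) ≤ g := le_trans ht h.le
    have hgp : g ^ q ≤ g ^ pv := Real.rpow_le_rpow_of_exponent_le hg1 hpv
    have h2 : t ^ (1-q) * g ^ q ≥ g := by
      have hsp : g ^ q = g ^ (q - 1) * g := by
        have hh := Real.rpow_add (by linarith : (0:ℝ) < g) (q-1) 1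
        rw [Real.rpow_one] at hh
        rw [← hh]; ring_nf
      rw [hsp]
      have h3 : t ^ (q-1) ≤ g ^ (q-1) := Real.rpow_le_rpow (by linarith) h.le (by linarith)
      have h4 : t ^ (1-q) * t ^ (q-1) = 1 := by
        rw [← Real.rpow_add ht0]; norm_num
      have h5 : (0:ℝ) ≤ t ^ (1-q) := Real.rpow_nonneg ht0.le _
      calc g = 1 * g := (one_mul g).symm
        _ = t ^ (1-q) * t ^ (q-1) * g := by rw [h4]
        _ ≤ t ^ (1-q) * g ^ (q-1) * g := by
            apply mul_le_mul_of_nonneg_right _ (by linarith : (0:ℝ) ≤ g)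
            exact mul_le_mul_of_nonneg_left h3 h5
        _ = t ^ (1-q) * (g ^ (q-1) * g) := by ring
    have h5 : t ^ (1-q) * g ^ q ≤ t ^ (1-q) * g ^ pv :=
      mul_le_mul_of_nonneg_left hgp (Real.rpow_nonneg (by linarith) _)
    linarith

lemma aux_tdiv {b q : ℝ} (hb : 0 < b) (hq : 1 ≤ q) :
    (max 1 (b ^ (-(1/q)))) ^ (1 - q) / b ≤ max 1 (b ^ (-(1/q))) := by
  have hq0 : (0:ℝ) < q := by linarith
  have hexp : -(1/q) ≤ 0 := neg_nonpos.mpr (by positivity)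
  rcases le_total 1 b with h | h
  · have hs : b ^ (-(1/q)) ≤ 1 := Real.rpow_le_one_of_one_le_of_nonpos h hexp
    rw [max_eq_left hs, Real.one_rpow]
    have : 1 / b ≤ 1 := by
      rw [div_le_one (by linarith)]; exact h
    linarith [le_max_left (1:ℝ) (b ^ (-(1/q)))]
  · have hs : 1 ≤ b ^ (-(1/q)) :=
      Real.one_le_rpow_of_pos_of_le_one_of_nonpos hb h hexp
    rw [max_eq_right hs]
    have key : (b ^ (-(1/q))) ^ (1 - q) / b = b ^ (-(1/q)) := by
      rw [← Real.rpow_mul hb.le]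
      rw [div_eq_iff hb.ne']
      nth_rewrite 3 [← Real.rpow_one b]
      rw [← Real.rpow_add hb]
      congr 1
      field_simp
      ring
    rw [key]

end AuxLemmas

set_option maxHeartbeats 1000000

/-- Lemma 4.4, uniform boundedness of the averaging operators `A_B`. -/
theorem averaging_operators_uniformly_bounded
    (n : ℕ) (Ω : Set (Eucl n)) (hΩo : IsOpen Ω) (hΩc : IsConnected Ω)
    (hΩb : Bornology.IsBounded Ω)
    (p : Eucl n → ℝ) (hpm : Measurable p) (hp1 : ∀ x ∈ Ω, 1 ≤ p x)
    (hpb : ∃ M : ℝ, ∀ᵐ x ∂(volume.restrict Ω), p x ≤ M)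
    (τ : ℝ) (hτ : 1 ≤ τ) (C₀ : ℝ) (hC₀ : 0 < C₀) (hLH : BoundaryLH Ω p τ C₀) :
    ∃ C : ℝ, ∀ x ∈ Ω, ∀ f : Eucl n → ℝ, Measurable f → MemVarLp Ω p f →
      luxNorm Ω p (avgOpB Ω τ x f) ≤ C * luxNorm Ω p f := by
  obtain ⟨M, hM⟩ := hpb
  -- constants
  set κ : ℝ := (volume (ball (0 : Eucl n) 1)).toReal with hκdef
  have hκpos : 0 < κ := ENNReal.toReal_pos (measure_ball_pos volume _ one_pos).ne'
    measure_ball_lt_top.ne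
  set β : ℝ := (volume (ball (0 : Eucl n) (1/2))).toReal with hβdef
  have hβpos : 0 < β := ENNReal.toReal_pos (measure_ball_pos volume _ (by norm_num)).ne'
    measure_ball_lt_top.ne
  set T₀ : ℝ := max 1 β⁻¹ with hT₀def
  have hT₀1 : 1 ≤ T₀ := le_max_left _ _
  set VΩ : ℝ := (volume Ω).toReal with hVΩdef
  have hVΩ0 : 0 ≤ VΩ := ENNReal.toReal_nonneg
  have hΩfin : volume Ω ≠ ⊤ := hΩb.measure_lt_top.ne
  set lam : ℝ := n * C₀ + (C₀ / Real.log 2) * max 0 (-Real.log κ) with hlamdef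
  have hlam0 : 0 ≤ lam := by
    have h2 : (0:ℝ) < Real.log 2 := Real.log_pos one_lt_two
    have : 0 ≤ (C₀ / Real.log 2) * max 0 (-Real.log κ) :=
      mul_nonneg (by positivity) (le_max_left _ _)
    positivity
  set K₂ : ℝ := Real.exp lam with hK₂def
  have hK₂1 : 1 ≤ K₂ := Real.one_le_exp hlam0
  set C : ℝ := 2 * T₀ * (1 + VΩ) + 2 * K₂ with hCdef
  have hCpos : 0 < C := by positivity
  have hC2T₀ : 2 * T₀ ≤ C := by nlinarith
  have hC2T₀V : 2 * T₀ * VΩ ≤ C := by nlinarith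
  have hC2K₂ : 2 * K₂ ≤ C := by nlinarith
  refine ⟨C, fun x hx f hf hmem => ?_⟩
  -- the key estimate
  have key : ∀ l : ℝ, 0 < l →
      (∫⁻ y in Ω, ENNReal.ofReal ((|f y| / l) ^ (p y))) ≤ 1 →
      (∫⁻ y in Ω, ENNReal.ofReal ((|avgOpB Ω τ x f y| / (C * l)) ^ (p y))) ≤ 1 := by
    intro l hl hlmod
    have hΩmeas : MeasurableSet Ω := hΩo.measurableSet
    set r : ℝ := τ * bdist Ω x with hrdef
    by_cases hr : 0 < r
    · -- main case
      set B : Set (Eucl n) := ballB Ω τ x with hBdef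
      have hBball : B = ball x r := rfl
      have hBmeas : MeasurableSet B := measurableSet_ball
      set E : Set (Eucl n) := B ∩ Ω with hEdef
      have hEmeas : MeasurableSet E := hBmeas.inter hΩmeas
      have hBvol : volume B = ENNReal.ofReal (r ^ n) * volume (ball (0 : Eucl n) 1) := by
        rw [hBball, Measure.addHaar_ball_of_pos _ _ hr, finrank_euclideanSpace_fin]
      have hBfin : volume B ≠ ⊤ := by rw [hBball]; exact measure_ball_lt_top.ne
      have hBpos : volume B ≠ 0 := by rw [hBball]; exact (measure_ball_pos volume x hr).ne'
      set b : ℝ := (volume B).toReal with hbdef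
      have hb : 0 < b := ENNReal.toReal_pos hBpos hBfin
      have hbrk : b = r ^ n * κ := by
        rw [hbdef, hBvol, ENNReal.toReal_mul, ENNReal.toReal_ofReal (by positivity), hκdef]
      have hEvol0 : volume E ≠ 0 := by
        obtain ⟨ε, hε, hball⟩ := Metric.isOpen_iff.1 hΩo x hx
        have hsub : ball x (min r ε) ⊆ E := by
          rw [hEdef, hBball]
          exact subset_inter (ball_subset_ball (min_le_left _ _))
            ((ball_subset_ball (min_le_right _ _)).trans hball)
        exact fun h0 =>
          (measure_ball_pos volume x (lt_min hr hε)).ne' (measure_mono_null hsub h0)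
      set μE : Measure (Eucl n) := volume.restrict E with hμEdef
      have hμE0 : μE ≠ 0 := by rwa [hμEdef, Ne, Measure.restrict_eq_zero]
      have hNeBot : (ae μE).NeBot := ae_neBot.2 hμE0
      have hp1E : ∀ᵐ y ∂μE, 1 ≤ p y := by
        have h := ae_restrict_mem (μ := volume) hEmeas
        exact h.mono fun y hy => hp1 y hy.2
      have hpME : ∀ᵐ y ∂μE, p y ≤ M := by
        have hle : μE ≤ volume.restrict Ω := by
          rw [hμEdef, hEdef]
          exact Measure.restrict_mono inter_subset_right le_rfl
        exact hM.filter_mono (ae_mono hle)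
      have hbd1 : IsBoundedUnder (· ≤ ·) (ae μE) p := ⟨M, eventually_map.2 hpME⟩
      have hbd2 : IsBoundedUnder (· ≥ ·) (ae μE) p := ⟨1, eventually_map.2 hp1E⟩
      set q : ℝ := essInf p μE with hqdef
      set Q : ℝ := essSup p μE with hQdef
      have hq1 : 1 ≤ q := le_liminf_of_le hbd1.isCoboundedUnder_ge hp1E
      have hqp : ∀ᵐ y ∂μE, q ≤ p y := ae_essInf_le hbd2
      have hpQ : ∀ᵐ y ∂μE, p y ≤ Q := ae_le_essSup hbd1
      have hqQ : q ≤ Q := liminf_le_limsup hbd1 hbd2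
      have hq0 : (0:ℝ) < q := lt_of_lt_of_le one_pos hq1
      set s : ℝ := b ^ (-(1/q)) with hsdef
      have hspos : 0 < s := Real.rpow_pos_of_pos hb _
      set t : ℝ := max 1 s with htdef
      have ht1 : 1 ≤ t := le_max_left _ _
      have ht0 : (0:ℝ) < t := lt_of_lt_of_le one_pos ht1
      have hmodE : (∫⁻ y in E, ENNReal.ofReal ((|f y| / l) ^ p y)) ≤ 1 := by
        refine le_trans (lintegral_mono' ?_ le_rfl) hlmod
        rw [hEdef]
        exact Measure.restrict_mono inter_subset_right le_rfl
      have hmeasg : Measurable fun y => ENNReal.ofReal ((|f y| / l) ^ p y) :=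
        ((hf.abs.div_const l).pow hpm).ennreal_ofReal
      have hsplit : (∫⁻ y in E, ENNReal.ofReal (|f y| / l)) ≤
          ENNReal.ofReal t * volume E + ENNReal.ofReal (t ^ (1-q)) := by
        have hptw : ∀ᵐ y ∂μE, ENNReal.ofReal (|f y| / l) ≤
            ENNReal.ofReal t + ENNReal.ofReal (t ^ (1-q)) * ENNReal.ofReal ((|f y| / l) ^ p y) := by
          filter_upwards [hp1E, hqp] with y h1 h2
          rw [← ENNReal.ofReal_mul (Real.rpow_nonneg ht0.le _),
            ← ENNReal.ofReal_add ht0.le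
              (mul_nonneg (Real.rpow_nonneg ht0.le _) (Real.rpow_nonneg (by positivity) _))]
          exact ENNReal.ofReal_le_ofReal (aux_split (by positivity) ht1 hq1 h2)
        calc (∫⁻ y in E, ENNReal.ofReal (|f y| / l))
            ≤ ∫⁻ y in E, (ENNReal.ofReal t
                + ENNReal.ofReal (t ^ (1-q)) * ENNReal.ofReal ((|f y| / l) ^ p y)) := by
              exact lintegral_mono_ae hptw
          _ = ENNReal.ofReal t * volume E + ENNReal.ofReal (t ^ (1-q))
                * ∫⁻ y in E, ENNReal.ofReal ((|f y| / l) ^ p y) := by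
              rw [lintegral_add_left measurable_const, lintegral_const,
                Measure.restrict_apply_univ, lintegral_const_mul _ hmeasg]
          _ ≤ ENNReal.ofReal t * volume E + ENNReal.ofReal (t ^ (1-q)) * 1 := by gcongr
          _ = _ := by rw [mul_one]
      have hvolEB : volume E ≤ ENNReal.ofReal b := by
        rw [hbdef, ENNReal.ofReal_toReal hBfin, hEdef]
        exact measure_mono inter_subset_left
      have hIbound : |∫ z in E, f z| ≤ l * (t * b + t ^ (1-q)) := by
        have h1 : ‖∫ z in E, f z‖ ≤ (∫⁻ z in E, ENNReal.ofReal ‖f z‖).toReal :=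
          norm_integral_le_lintegral_norm _
        have h2 : (∫⁻ z in E, ENNReal.ofReal ‖f z‖)
            = ENNReal.ofReal l * ∫⁻ z in E, ENNReal.ofReal (|f z| / l) := by
          rw [← lintegral_const_mul _ ((hf.abs.div_const l).ennreal_ofReal)]
          apply lintegral_congr
          intro z
          rw [← ENNReal.ofReal_mul hl.le]
          congr 1
          rw [Real.norm_eq_abs]
          field_simp
        have h3 : (∫⁻ z in E, ENNReal.ofReal ‖f z‖)
            ≤ ENNReal.ofReal (l * (t * b + t ^ (1-q))) := by
          rw [h2, ENNReal.ofReal_mul hl.le]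
          apply mul_le_mul_right
          calc (∫⁻ z in E, ENNReal.ofReal (|f z| / l))
              ≤ ENNReal.ofReal t * volume E + ENNReal.ofReal (t ^ (1-q)) := hsplit
            _ ≤ ENNReal.ofReal t * ENNReal.ofReal b + ENNReal.ofReal (t ^ (1-q)) := by gcongr
            _ = ENNReal.ofReal (t * b + t ^ (1-q)) := by
                rw [← ENNReal.ofReal_mul ht0.le,
                  ← ENNReal.ofReal_add (by positivity) (Real.rpow_nonneg ht0.le _)]
        have h4 := ENNReal.toReal_le_of_le_ofReal (by positivity) h3
        rw [Real.norm_eq_abs] at h1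
        linarith
      set c : ℝ := (volume B).toReal⁻¹ * ∫ z in E, f z with hcdef
      have hAf : ∀ y, avgOpB Ω τ x f y = Set.indicator B (fun _ => c) y := fun y => rfl
      have hcb : |c| ≤ 2 * (l * t) := by
        have htd : t ^ (1-q) / b ≤ t := aux_tdiv hb hq1
        have h5 : |c| ≤ b⁻¹ * (l * (t * b + t ^ (1-q))) := by
          rw [hcdef, abs_mul, abs_inv, abs_of_pos (by rw [← hbdef]; exact hb)]
          rw [← hbdef]
          exact mul_le_mul_of_nonneg_left hIbound (by positivity)
        have h6 : b⁻¹ * (l * (t * b + t ^ (1-q))) = l * (t + t ^ (1-q) / b) := by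
          field_simp
          try ring
        rw [h6] at h5
        have h7 : t + t ^ (1-q) / b ≤ t + t := by linarith
        have h8 : l * (t + t ^ (1-q) / b) ≤ l * (t + t) :=
          mul_le_mul_of_nonneg_left h7 hl.le
        calc |c| ≤ l * (t + t ^ (1-q) / b) := h5
          _ ≤ l * (t + t) := h8
          _ = 2 * (l * t) := by ring
      -- generic machinery
      have hmain : ∀ W : ℝ≥0∞,
          (∀ᵐ y ∂(volume.restrict Ω),
            ENNReal.ofReal ((|avgOpB Ω τ x f y| / (C * l)) ^ p y)
              ≤ Set.indicator B (fun _ => W) y) →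
          (∫⁻ y in Ω, ENNReal.ofReal ((|avgOpB Ω τ x f y| / (C * l)) ^ p y))
            ≤ W * volume E := by
        intro W hW
        calc (∫⁻ y in Ω, ENNReal.ofReal ((|avgOpB Ω τ x f y| / (C * l)) ^ p y))
            ≤ ∫⁻ y in Ω, Set.indicator B (fun _ => W) y := lintegral_mono_ae hW
          _ = ∫⁻ _ in B, W ∂(volume.restrict Ω) := lintegral_indicator hBmeas _
          _ = W * (volume.restrict Ω) B := setLIntegral_const _ _
          _ = W * volume E := by rw [Measure.restrict_apply hBmeas, ← hEdef]
      have haeΩ : ∀ᵐ y ∂(volume.restrict Ω), 1 ≤ p y :=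
        (ae_restrict_mem hΩmeas).mono hp1
      have haeQ : ∀ᵐ y ∂(volume.restrict Ω), y ∈ B → p y ≤ Q := by
        have hres : μE = (volume.restrict Ω).restrict B := by
          rw [hμEdef, hEdef, Measure.restrict_restrict hBmeas]
        exact (ae_restrict_iff' hBmeas).1 (hres ▸ hpQ)
      have hCl : (0:ℝ) < C * l := mul_pos hCpos hl
      have hoffb : ∀ y, 1 ≤ p y → y ∉ B →
          ENNReal.ofReal ((|avgOpB Ω τ x f y| / (C * l)) ^ p y) = 0 := by
        intro y h1 hy
        rw [hAf y, Set.indicator_of_notMem hy]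
        rw [abs_zero, zero_div, Real.zero_rpow (by linarith), ENNReal.ofReal_zero]
      by_cases hcase : t ≤ T₀
      · -- moderate ball
        have hbase : ∀ y ∈ B, |avgOpB Ω τ x f y| / (C * l) ≤ 2 * T₀ / C := by
          intro y hy
          rw [hAf y, Set.indicator_of_mem hy]
          calc |c| / (C * l) ≤ (2 * (l * t)) / (C * l) := by gcongr
            _ = 2 * t / C := by field_simp
            _ ≤ 2 * T₀ / C := by gcongr
        have h2T : 2 * T₀ / C ≤ 1 := by rw [div_le_one hCpos]; linarith
        have h2T0 : (0:ℝ) < 2 * T₀ / C := by positivity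
        refine le_trans (hmain (ENNReal.ofReal (2 * T₀ / C)) ?_) ?_
        · filter_upwards [haeΩ] with y h1
          by_cases hy : y ∈ B
          · rw [Set.indicator_of_mem hy]
            apply ENNReal.ofReal_le_ofReal
            calc (|avgOpB Ω τ x f y| / (C * l)) ^ p y
                ≤ (2 * T₀ / C) ^ p y :=
                  Real.rpow_le_rpow (by positivity) (hbase y hy) (by linarith)
              _ ≤ (2 * T₀ / C) ^ (1:ℝ) :=
                  Real.rpow_le_rpow_of_exponent_ge h2T0 h2T h1
              _ = 2 * T₀ / C := Real.rpow_one _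
          · rw [Set.indicator_of_notMem hy, hoffb y h1 hy]
        · calc ENNReal.ofReal (2 * T₀ / C) * volume E
              ≤ ENNReal.ofReal (2 * T₀ / C) * volume Ω := by
                have hsub : E ⊆ Ω := by rw [hEdef]; exact inter_subset_right
                exact mul_le_mul_right (measure_mono hsub) _
            _ = ENNReal.ofReal (2 * T₀ / C) * ENNReal.ofReal VΩ := by
                rw [hVΩdef, ENNReal.ofReal_toReal hΩfin]
            _ = ENNReal.ofReal (2 * T₀ / C * VΩ) := (ENNReal.ofReal_mul (by positivity)).symm
            _ ≤ 1 := by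
                rw [← ENNReal.ofReal_one]
                apply ENNReal.ofReal_le_ofReal
                rw [div_mul_eq_mul_div, div_le_one hCpos]
                linarith
      · -- small ball case
        have hs1 : 1 < s := by
          rcases le_or_gt s 1 with h | h
          · exact absurd (by rw [htdef, max_eq_left h]; exact hT₀1) hcase
          · exact h
        have hts : t = s := max_eq_right hs1.le
        have hblt : b < 1 := by
          by_contra h
          push_neg at h
          have : s ≤ 1 := Real.rpow_le_one_of_one_le_of_nonpos h
            (neg_nonpos.2 (by positivity))
          linarith
        have h1q : 1/q ≤ 1 := by rw [div_le_one hq0]; exact hq1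
        have hrhalf : r ≤ 1/2 := by
          by_contra h
          push_neg at h
          have hvol : volume (ball (0 : Eucl n) (1/2 : ℝ)) ≤ volume B := by
            rw [← Measure.addHaar_ball_center volume x, hBball]
            exact measure_mono (ball_subset_ball (by linarith))
          have hβb : β ≤ b := by
            rw [hβdef, hbdef]
            exact ENNReal.toReal_mono hBfin hvol
          have hsT : s ≤ T₀ := by
            have hs2 : s ≤ b⁻¹ := by
              rw [hsdef, ← Real.rpow_neg_one b]
              exact Real.rpow_le_rpow_of_exponent_ge hb hblt.le (by linarith)
            have hinv : b⁻¹ ≤ β⁻¹ := inv_anti₀ hβpos hβb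
            exact le_trans hs2 (le_trans hinv (le_max_right _ _))
          rw [hts] at hcase
          exact hcase hsT
        have hδ : Q - q ≤ C₀ / (-Real.log r) := hLH x hx hrhalf
        have hδ0 : (0:ℝ) ≤ Q - q := by linarith
        have hL2 : (0:ℝ) < Real.log 2 := Real.log_pos one_lt_two
        have hlogr : Real.log r ≤ -Real.log 2 := by
          calc Real.log r ≤ Real.log (1/2) := Real.log_le_log hr hrhalf
            _ = -Real.log 2 := by rw [one_div, Real.log_inv]
        have hLpos : (0:ℝ) < -Real.log r := by linarith
        have hδC : (Q - q) * (-Real.log r) ≤ C₀ := by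
          rw [← le_div_iff₀ hLpos]
          exact hδ
        have hδ2 : Q - q ≤ C₀ / Real.log 2 :=
          le_trans hδ (div_le_div_of_nonneg_left hC₀.le hL2 (by linarith))
        have hlogb : Real.log b = n * Real.log r + Real.log κ := by
          rw [hbrk, Real.log_mul (by positivity) hκpos.ne', Real.log_pow]
        have hbQq : b ^ (-(Q - q)) ≤ K₂ := by
          rw [Real.rpow_def_of_pos hb, hK₂def]
          apply Real.exp_le_exp.2
          have e2 : (Q - q) * (-Real.log κ) ≤ (C₀ / Real.log 2) * max 0 (-Real.log κ) := by
            calc (Q - q) * (-Real.log κ) ≤ (Q - q) * max 0 (-Real.log κ) :=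
                mul_le_mul_of_nonneg_left (le_max_right _ _) hδ0
              _ ≤ (C₀ / Real.log 2) * max 0 (-Real.log κ) :=
                mul_le_mul_of_nonneg_right hδ2 (le_max_left _ _)
          have e1 : (n:ℝ) * ((Q - q) * (-Real.log r)) ≤ n * C₀ :=
            mul_le_mul_of_nonneg_left hδC (Nat.cast_nonneg n)
          calc Real.log b * (-(Q - q))
              = (n:ℝ) * ((Q - q) * (-Real.log r)) + (Q - q) * (-Real.log κ) := by
                rw [hlogb]; ring
            _ ≤ (n:ℝ) * C₀ + (C₀ / Real.log 2) * max 0 (-Real.log κ) := by linarith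
            _ = lam := by rw [hlamdef]
        set C₂ : ℝ := C / 2 with hC₂def
        have hC₂K : K₂ ≤ C₂ := by rw [hC₂def]; linarith
        have hC₂1 : (1:ℝ) ≤ C₂ := le_trans hK₂1 hC₂K
        have hC₂pos : (0:ℝ) < C₂ := by linarith
        have hbase : ∀ y ∈ B, |avgOpB Ω τ x f y| / (C * l) ≤ s / C₂ := by
          intro y hy
          rw [hAf y, Set.indicator_of_mem hy]
          calc |c| / (C * l) ≤ (2 * (l * t)) / (C * l) := by gcongr
            _ = t / C₂ := by rw [hC₂def]; field_simp
            _ = s / C₂ := by rw [hts]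
        have hsb1 : s * b ≤ 1 := by
          have hse : s * b = b ^ (1 - 1/q) := by
            have hh := Real.rpow_add hb (-(1/q)) 1
            rw [Real.rpow_one] at hh
            rw [hsdef, ← hh]
            congr 1
            ring
          rw [hse]
          exact Real.rpow_le_one hb.le hblt.le (by linarith)
        by_cases hsC : s ≤ C₂
        · -- W = s / C₂
          have hsC1 : s / C₂ ≤ 1 := by rw [div_le_one hC₂pos]; exact hsC
          refine le_trans (hmain (ENNReal.ofReal (s / C₂)) ?_) ?_
          · filter_upwards [haeΩ] with y h1
            by_cases hy : y ∈ B
            · rw [Set.indicator_of_mem hy]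
              apply ENNReal.ofReal_le_ofReal
              calc (|avgOpB Ω τ x f y| / (C * l)) ^ p y
                  ≤ (s / C₂) ^ p y :=
                    Real.rpow_le_rpow (by positivity) (hbase y hy) (by linarith)
                _ ≤ (s / C₂) ^ (1:ℝ) :=
                    Real.rpow_le_rpow_of_exponent_ge (by positivity) hsC1 h1
                _ = s / C₂ := Real.rpow_one _
            · rw [Set.indicator_of_notMem hy, hoffb y h1 hy]
          · calc ENNReal.ofReal (s / C₂) * volume E
                ≤ ENNReal.ofReal (s / C₂) * ENNReal.ofReal b := by gcongr
              _ = ENNReal.ofReal (s / C₂ * b) := (ENNReal.ofReal_mul (by positivity)).symm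
              _ ≤ 1 := by
                  rw [← ENNReal.ofReal_one]
                  apply ENNReal.ofReal_le_ofReal
                  rw [div_mul_eq_mul_div, div_le_one hC₂pos]
                  linarith
        · -- W = s^Q / C₂
          push_neg at hsC
          have h1sC : (1:ℝ) ≤ s / C₂ := by rw [le_div_iff₀ hC₂pos]; linarith
          have hQ1 : (1:ℝ) ≤ Q := le_trans hq1 hqQ
          have hC₂Q : C₂ ≤ C₂ ^ Q := by
            calc C₂ = C₂ ^ (1:ℝ) := (Real.rpow_one _).symm
              _ ≤ C₂ ^ Q := Real.rpow_le_rpow_of_exponent_le hC₂1 hQ1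
          have hsQb : s ^ Q * b ≤ K₂ := by
            have hs3 : s ^ Q = b ^ (-(1/q) * Q) := by
              rw [hsdef, Real.rpow_mul hb.le]
            have hh := Real.rpow_add hb (-(1/q) * Q) 1
            rw [Real.rpow_one] at hh
            have hs4 : s ^ Q * b = b ^ (-(1/q) * Q + 1) := by rw [hs3, hh]
            rw [hs4]
            calc b ^ (-(1/q) * Q + 1) ≤ b ^ (-(Q - q)) := by
                  apply Real.rpow_le_rpow_of_exponent_ge hb hblt.le
                  have hqq : -(1/q) * Q + 1 = (q - Q) / q := by field_simp; ring
                  have hprod : 0 ≤ (Q - q) * (q - 1) := mul_nonneg hδ0 (by linarith)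
                  have hql : -(Q - q) * q = q - Q - (Q - q) * (q - 1) := by ring
                  rw [hqq, le_div_iff₀ hq0, hql]
                  linarith [hprod]
              _ ≤ K₂ := hbQq
          refine le_trans (hmain (ENNReal.ofReal (s ^ Q / C₂)) ?_) ?_
          · filter_upwards [haeΩ, haeQ] with y h1 h2
            by_cases hy : y ∈ B
            · rw [Set.indicator_of_mem hy]
              apply ENNReal.ofReal_le_ofReal
              calc (|avgOpB Ω τ x f y| / (C * l)) ^ p y
                  ≤ (s / C₂) ^ p y :=
                    Real.rpow_le_rpow (by positivity) (hbase y hy) (by linarith)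
                _ ≤ (s / C₂) ^ Q :=
                    Real.rpow_le_rpow_of_exponent_le h1sC (h2 hy)
                _ = s ^ Q / C₂ ^ Q := Real.div_rpow hspos.le hC₂pos.le _
                _ ≤ s ^ Q / C₂ :=
                    div_le_div_of_nonneg_left (Real.rpow_nonneg hspos.le _) hC₂pos hC₂Q
            · rw [Set.indicator_of_notMem hy, hoffb y h1 hy]
          · calc ENNReal.ofReal (s ^ Q / C₂) * volume E
                ≤ ENNReal.ofReal (s ^ Q / C₂) * ENNReal.ofReal b := by gcongr
              _ = ENNReal.ofReal (s ^ Q / C₂ * b) := (ENNReal.ofReal_mul (by positivity)).symm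
              _ ≤ 1 := by
                  rw [← ENNReal.ofReal_one]
                  apply ENNReal.ofReal_le_ofReal
                  rw [div_mul_eq_mul_div, div_le_one hC₂pos]
                  linarith
    · -- degenerate case : empty ball
      have hBempty : ballB Ω τ x = ∅ := by
        rw [ballB, ← hrdef]
        exact ball_eq_empty.2 (not_lt.1 hr)
      have hz : ∀ᵐ y ∂(volume.restrict Ω),
          ENNReal.ofReal ((|avgOpB Ω τ x f y| / (C * l)) ^ p y) = 0 := by
        filter_upwards [ae_restrict_mem hΩmeas] with y hy
        have hpy : 1 ≤ p y := hp1 y hy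
        rw [avgOpB, hBempty]
        simp [Real.zero_rpow (by linarith : p y ≠ 0)]
      rw [lintegral_congr_ae hz]
      simp

  -- conclude via sInf manipulation
  have hΩmeas : MeasurableSet Ω := hΩo.measurableSet
  set Sf := {l : ℝ | 0 < l ∧ (∫⁻ y in Ω, ENNReal.ofReal ((|f y| / l) ^ (p y))) ≤ 1} with hSf
  set SA := {l : ℝ | 0 < l ∧
    (∫⁻ y in Ω, ENNReal.ofReal ((|avgOpB Ω τ x f y| / l) ^ (p y))) ≤ 1} with hSA
  have hSfne : Sf.Nonempty := hmem
  have hbddA : BddBelow SA := ⟨0, fun y hy => hy.1.le⟩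
  have h1 : ∀ l ∈ Sf, sInf SA ≤ C * l := by
    intro l hl
    exact csInf_le hbddA ⟨mul_pos hCpos hl.1, key l hl.1 hl.2⟩
  have h2 : sInf SA / C ≤ sInf Sf := by
    apply le_csInf hSfne
    intro l hl
    rw [div_le_iff₀ hCpos]
    rw [mul_comm]
    exact h1 l hl
  have : luxNorm Ω p (avgOpB Ω τ x f) = sInf SA := rfl
  rw [this]
  have : luxNorm Ω p f = sInf Sf := rfl
  rw [this]
  calc sInf SA = C * (sInf SA / C) := by field_simp
    _ ≤ C * sInf Sf := by
        exact mul_le_mul_of_nonneg_left h2 hCpos.le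
end
end

section
/- Let Ω ⊂ ℝⁿ be a bounded domain and let p(·) be an exponent function with 1 < p_- ≤ p_+ < ∞. If p(·) ∈ ∂LH_0^τ(Ω) for some τ ≥ 1, then p(·) satisfies the boundary K₀ condition ∂K_0^τ(Ω): sup_{x∈Ω} |B_{x,τ}|^{-1} ‖χ_{B_{x,τ}∩Ω}‖_{L^{p(·)}(Ω)} ‖χ_{B_{x,τ}∩Ω}‖_{L^{p'(·)}(Ω)} < ∞, where p'(·) is the pointwise dual exponent, 1/p(x) + 1/p'(x) = 1, and |B_{x,τ}| is the Lebesgue measure of the ball B(x, τ d(x)). -/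
open MeasureTheory Metric Set Filter Topology

noncomputable section

/-! ### Auxiliary lemmas -/

lemma luxNorm_nonneg {n : ℕ} (A : Set (Eucl n)) (p f : Eucl n → ℝ) :
    0 ≤ luxNorm A p f :=
  Real.sInf_nonneg (fun _ hl => hl.1.le)

lemma modular_indicator {n : ℕ} {Ω E : Set (Eucl n)} (hEm : MeasurableSet E) (hEΩ : E ⊆ Ω)
    {q : Eucl n → ℝ} (hq0 : ∀ᵐ y ∂(volume.restrict Ω), q y ≠ 0) (l : ℝ) :
    (∫⁻ y in Ω, ENNReal.ofReal ((|Set.indicator E (fun _ => (1:ℝ)) y| / l) ^ (q y)))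
      = ∫⁻ y in E, ENNReal.ofReal ((1 / l) ^ (q y)) := by
  have h : ∀ᵐ y ∂(volume.restrict Ω),
      ENNReal.ofReal ((|Set.indicator E (fun _ => (1:ℝ)) y| / l) ^ (q y))
        = E.indicator (fun y => ENNReal.ofReal ((1 / l) ^ (q y))) y := by
    filter_upwards [hq0] with y hqy
    by_cases hy : y ∈ E
    · simp [Set.indicator_of_mem hy]
    · simp [Set.indicator_of_notMem hy, Real.zero_rpow hqy]
  rw [lintegral_congr_ae h, lintegral_indicator hEm, Measure.restrict_restrict hEm,
    Set.inter_eq_self_of_subset_left hEΩ]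

lemma luxNorm_indicator_le {n : ℕ} {Ω E : Set (Eucl n)} (hEm : MeasurableSet E) (hEΩ : E ⊆ Ω)
    {q : Eucl n → ℝ} (hq0 : ∀ᵐ y ∂(volume.restrict Ω), q y ≠ 0)
    {l : ℝ} (hl : 0 < l)
    (h : (∫⁻ y in E, ENNReal.ofReal ((1 / l) ^ (q y))) ≤ 1) :
    luxNorm Ω q (Set.indicator E (fun _ => (1:ℝ))) ≤ l :=
  csInf_le ⟨0, fun _ hy => hy.1.le⟩ ⟨hl, by rw [modular_indicator hEm hEΩ hq0]; exact h⟩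

lemma luxNorm_indicator_null {n : ℕ} {Ω E : Set (Eucl n)} (hEm : MeasurableSet E) (hEΩ : E ⊆ Ω)
    {q : Eucl n → ℝ} (hq0 : ∀ᵐ y ∂(volume.restrict Ω), q y ≠ 0) (hE0 : volume E = 0) :
    luxNorm Ω q (Set.indicator E (fun _ => (1:ℝ))) = 0 := by
  have hset : {l : ℝ | 0 < l ∧
      (∫⁻ y in Ω, ENNReal.ofReal ((|Set.indicator E (fun _ => (1:ℝ)) y| / l) ^ (q y))) ≤ 1}
      = Ioi (0:ℝ) := by
    ext l
    constructor
    · exact fun h => h.1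
    · intro hl
      refine ⟨hl, ?_⟩
      rw [modular_indicator hEm hEΩ hq0, Measure.restrict_eq_zero.2 hE0, lintegral_zero_measure]
      exact zero_le
  rw [luxNorm, hset, csInf_Ioi]

lemma modular_le_one {n : ℕ} {E : Set (Eucl n)}
    (hEfin : volume E ≠ ⊤) (hE0 : volume E ≠ 0)
    {q : Eucl n → ℝ} {c Q : ℝ}
    (hq : ∀ᵐ y ∂(volume.restrict E), c ^ (q y) ≤ c ^ Q)
    (hcQ : c ^ Q = ((volume E).toReal)⁻¹) :
    (∫⁻ y in E, ENNReal.ofReal (c ^ (q y))) ≤ 1 := by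
  have hm : 0 < (volume E).toReal := ENNReal.toReal_pos hE0 hEfin
  calc (∫⁻ y in E, ENNReal.ofReal (c ^ (q y)))
      ≤ ∫⁻ _ in E, ENNReal.ofReal (c ^ Q) :=
        lintegral_mono_ae (hq.mono fun y h => ENNReal.ofReal_le_ofReal h)
    _ = ENNReal.ofReal (c ^ Q) * volume E := setLIntegral_const E _
    _ = 1 := by
        rw [hcQ, ENNReal.ofReal_inv_of_pos hm, ENNReal.ofReal_toReal hEfin,
          ENNReal.inv_mul_cancel hE0 hEfin]

lemma vol_ball_toReal {n : ℕ} (x : Eucl n) {r : ℝ} (hr : 0 < r) :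
    (volume (ball x r)).toReal = r ^ n * (volume (ball (0:Eucl n) 1)).toReal := by
  cases n with
  | zero =>
      have h1 : ball x r = (univ : Set (Eucl 0)) :=
        eq_univ_of_forall fun y => by simp [mem_ball, Subsingleton.elim y x, hr]
      have h2 : ball (0:Eucl 0) 1 = (univ : Set (Eucl 0)) :=
        eq_univ_of_forall fun y => by
          simp [mem_ball, Subsingleton.elim y (0:Eucl 0)]
      rw [h1, h2, pow_zero, one_mul]
  | succ k =>
      rw [Measure.addHaar_ball volume x hr.le, ENNReal.toReal_mul,
        ENNReal.toReal_ofReal (by positivity), finrank_euclideanSpace_fin]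

set_option maxHeartbeats 2000000 in
/-- Corollary 4.5, `∂LH₀^τ(Ω)` implies the boundary `K₀` condition. -/
theorem boundaryLH_implies_boundaryK0
    (n : ℕ) (Ω : Set (Eucl n)) (hΩo : IsOpen Ω) (hΩc : IsConnected Ω)
    (hΩb : Bornology.IsBounded Ω)
    (p : Eucl n → ℝ) (hpm : Measurable p) (hp1 : ∀ x ∈ Ω, 1 ≤ p x)
    (hpb : ∃ M : ℝ, ∀ᵐ x ∂(volume.restrict Ω), p x ≤ M)
    (hpminus : 1 < essInfOn p Ω)
    (τ : ℝ) (hτ : 1 ≤ τ) (C₀ : ℝ) (hC₀ : 0 < C₀) (hLH : BoundaryLH Ω p τ C₀) :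
    ∃ C : ℝ, ∀ x ∈ Ω,
      (volume (ballB Ω τ x)).toReal⁻¹
          * luxNorm Ω p (Set.indicator (ballB Ω τ x ∩ Ω) (fun _ => (1:ℝ)))
          * luxNorm Ω (dualExp p) (Set.indicator (ballB Ω τ x ∩ Ω) (fun _ => (1:ℝ)))
        ≤ C := by
  classical
  obtain ⟨M, hM⟩ := hpb
  have hΩm : MeasurableSet Ω := hΩo.measurableSet
  set pΩ := essInfOn p Ω with hpΩdef
  have hτ0 : (0:ℝ) ≤ τ := le_trans zero_le_one hτ
  -- global a.e. facts on Ω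
  have hp1ae : ∀ᵐ y ∂(volume.restrict Ω), 1 ≤ p y :=
    (ae_restrict_mem hΩm).mono fun y hy => hp1 y hy
  have hbddΩ_ge : IsBoundedUnder (· ≥ ·) (ae (volume.restrict Ω)) p :=
    ⟨1, eventually_map.2 hp1ae⟩
  have hlbΩ : ∀ᵐ y ∂(volume.restrict Ω), pΩ ≤ p y := ae_essInf_le hbddΩ_ge
  have hq0p : ∀ᵐ y ∂(volume.restrict Ω), p y ≠ 0 :=
    hp1ae.mono fun y hy => by linarith
  have hq0p' : ∀ᵐ y ∂(volume.restrict Ω), dualExp p y ≠ 0 := by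
    filter_upwards [hlbΩ] with y hy
    have h1 : 1 < p y := lt_of_lt_of_le hpminus hy
    have h2 : 0 < p y / (p y - 1) := div_pos (by linarith) (by linarith)
    simpa [dualExp] using h2.ne'
  -- geometric bounds
  obtain ⟨R₀, hR₀⟩ := hΩb.subset_closedBall (0 : Eucl n)
  set R := max R₀ 0 with hRdef
  have hR0 : (0:ℝ) ≤ R := le_max_right _ _
  have hΩR : Ω ⊆ closedBall (0 : Eucl n) R :=
    hR₀.trans (closedBall_subset_closedBall (le_max_left _ _))
  have hclR : closure Ω ⊆ closedBall (0 : Eucl n) R :=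
    closure_minimal hΩR isClosed_closedBall
  set ω := (volume (ball (0:Eucl n) 1)).toReal with hωdef
  have hω : 0 < ω :=
    ENNReal.toReal_pos (measure_ball_pos _ _ one_pos).ne' measure_ball_lt_top.ne
  set R' := τ * (2 * R) + 1 with hR'def
  have hR'0 : 0 < R' := by
    have h2R : (0:ℝ) ≤ 2 * R := by linarith
    have := mul_nonneg hτ0 h2R
    rw [hR'def]; linarith
  set Vmax := R' ^ n * ω with hVmaxdef
  set v₀ := (1/2 : ℝ) ^ n * ω with hv₀def
  have hv₀ : 0 < v₀ := by positivity
  set K₁ := Real.exp ((n : ℝ) * C₀ + C₀ / Real.log 2 * |Real.log ω|) with hK₁def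
  refine ⟨max (max 1 v₀⁻¹) (max K₁ Vmax), ?_⟩
  have hCnn : (0:ℝ) ≤ max (max 1 v₀⁻¹) (max K₁ Vmax) :=
    le_trans zero_le_one (le_trans (le_max_left _ _) (le_max_left _ _))
  intro x hx
  set r := τ * bdist Ω x with hrdef
  have hBall : ballB Ω τ x = ball x r := rfl
  set E := ballB Ω τ x ∩ Ω with hEdef
  have hEm : MeasurableSet E := measurableSet_ball.inter hΩm
  have hEΩ : E ⊆ Ω := inter_subset_right
  by_cases hE0 : volume E = 0
  · rw [luxNorm_indicator_null hEm hEΩ hq0p hE0]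
    simpa using hCnn
  · -- the main case
    have hr0 : 0 < r := by
      rcases le_or_gt r 0 with h | h
      · exfalso
        apply hE0
        have hb : ballB Ω τ x = ∅ := by rw [hBall]; exact ball_eq_empty.2 h
        rw [hEdef, hb, empty_inter]
        exact measure_empty
      · exact h
    have hBfin : volume (ballB Ω τ x) ≠ ⊤ := by
      rw [hBall]; exact measure_ball_lt_top.ne
    set V := (volume (ballB Ω τ x)).toReal with hVdef
    have hVform : V = r ^ n * ω := by
      rw [hVdef, hBall]; exact vol_ball_toReal x hr0
    have hV0 : 0 < V := by rw [hVform]; positivity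
    have hEfin : volume E ≠ ⊤ :=
      (lt_of_le_of_lt (measure_mono inter_subset_left) (lt_top_iff_ne_top.2 hBfin)).ne
    set m := (volume E).toReal with hmdef
    have hm0 : 0 < m := ENNReal.toReal_pos hE0 hEfin
    have hmV : m ≤ V := ENNReal.toReal_mono hBfin (measure_mono inter_subset_left)
    -- V ≤ Vmax
    have hd2R : bdist Ω x ≤ 2 * R := by
      rcases (frontier Ω).eq_empty_or_nonempty with h | ⟨y, hy⟩
      · rw [bdist, h, infDist_empty]; positivity
      · calc bdist Ω x ≤ dist x y := infDist_le_dist_of_mem hy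
          _ ≤ dist x 0 + dist 0 y := dist_triangle _ _ _
          _ ≤ R + R := add_le_add (mem_closedBall.1 (hΩR hx))
              (by rw [dist_comm]
                  exact mem_closedBall.1 (hclR (frontier_subset_closure hy)))
          _ = 2 * R := by ring
    have hrR' : r ≤ R' := by
      have h1 : τ * bdist Ω x ≤ τ * (2 * R) := mul_le_mul_of_nonneg_left hd2R hτ0
      rw [hrdef, hR'def]; linarith
    have hVmax : V ≤ Vmax := by
      rw [hVform, hVmaxdef]
      exact mul_le_mul_of_nonneg_right (pow_le_pow_left₀ hr0.le hrR' n) hω.le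
    -- a.e. facts on E
    have hub : ∀ᵐ y ∂(volume.restrict E), p y ≤ M :=
      ae_restrict_of_ae_restrict_of_subset hEΩ hM
    have hlb : ∀ᵐ y ∂(volume.restrict E), pΩ ≤ p y :=
      ae_restrict_of_ae_restrict_of_subset hEΩ hlbΩ
    set a := essInfOn p E with hadef
    set b := essSupOn p E with hbdef
    have hbdd_le : IsBoundedUnder (· ≤ ·) (ae (volume.restrict E)) p :=
      ⟨M, eventually_map.2 hub⟩
    have hbdd_ge : IsBoundedUnder (· ≥ ·) (ae (volume.restrict E)) p :=
      ⟨pΩ, eventually_map.2 hlb⟩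
    have hae_a : ∀ᵐ y ∂(volume.restrict E), a ≤ p y := ae_essInf_le hbdd_ge
    have hae_b : ∀ᵐ y ∂(volume.restrict E), p y ≤ b := ae_le_essSup hbdd_le
    have hNB : (ae (volume.restrict E)).NeBot :=
      ae_neBot.2 (by rwa [Ne, Measure.restrict_eq_zero])
    have hpΩa : pΩ ≤ a := le_liminf_of_le hbdd_le.isCoboundedUnder_ge hlb
    have h1a : 1 < a := lt_of_lt_of_le hpminus hpΩa
    have hab : a ≤ b := by
      obtain ⟨y, h1, h2⟩ := (hae_a.and hae_b).exists
      exact le_trans h1 h2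
    have h1b : 1 < b := lt_of_lt_of_le h1a hab
    have ha0 : a ≠ 0 := by linarith
    have hb0 : b ≠ 0 := by linarith
    have ha1 : a - 1 ≠ 0 := by intro h; apply absurd h; intro h'; linarith
    have hb1 : b - 1 ≠ 0 := by intro h; apply absurd h; intro h'; linarith
    set δ := 1/a - 1/b with hδdef
    have hδ0 : 0 ≤ δ := by
      have := one_div_le_one_div_of_le (by linarith : (0:ℝ) < a) hab
      rw [hδdef]; linarith
    have hδ1 : δ ≤ 1 := by
      have h1 : 1/a ≤ 1 := by rw [div_le_one (by linarith)]; linarith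
      have h2 : (0:ℝ) ≤ 1/b := by positivity
      rw [hδdef]; linarith
    have hgt1E : ∀ᵐ y ∂(volume.restrict E), 1 < p y :=
      hae_a.mono fun y hy => lt_of_lt_of_le h1a hy
    -- the final bound on V ^ (-δ)
    have hVneg : V ^ (-δ) ≤ max (max 1 v₀⁻¹) (max K₁ Vmax) := by
      rcases le_or_gt r (1/2) with hr_half | hr_half
      · -- log-Hölder regime
        have hLH' : b - a ≤ C₀ / (-Real.log r) := hLH x hx hr_half
        have hlog2 : (0:ℝ) < Real.log 2 := Real.log_pos one_lt_two
        have hlogr : Real.log 2 ≤ -Real.log r := by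
          have h1 : Real.log r ≤ Real.log (1/2) := by
            rw [Real.log_le_log_iff hr0 (by norm_num)]
            exact hr_half
          rw [one_div, Real.log_inv] at h1
          linarith
        have hnegr : (0:ℝ) < -Real.log r := lt_of_lt_of_le hlog2 hlogr
        have hδba : δ ≤ b - a := by
          have h' : δ = (b - a)/(a*b) := by rw [hδdef]; field_simp
          rw [h']
          have hab1 : (1:ℝ) ≤ a * b := by
            have h := mul_le_mul h1a.le h1b.le zero_le_one (le_trans zero_le_one h1a.le)
            simpa using h
          exact div_le_self (by linarith) hab1
        have hδC : δ * (-Real.log r) ≤ C₀ :=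
          (le_div_iff₀ hnegr).1 (le_trans hδba hLH')
        have hδlog2 : δ ≤ C₀ / Real.log 2 := by
          have h2 : C₀ / (-Real.log r) ≤ C₀ / Real.log 2 :=
            div_le_div_of_nonneg_left hC₀.le hlog2 hlogr
          linarith [le_trans hδba hLH']
        have hVexp : V ^ (-δ) = Real.exp ((Real.log V) * (-δ)) :=
          Real.rpow_def_of_pos hV0 _
        have hlogV : Real.log V = (n:ℝ) * Real.log r + Real.log ω := by
          rw [hVform, Real.log_mul (pow_ne_zero n hr0.ne') hω.ne', Real.log_pow]
        have hbound : ((n:ℝ) * Real.log r + Real.log ω) * (-δ)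
            ≤ (n:ℝ) * C₀ + C₀ / Real.log 2 * |Real.log ω| := by
          have t1 : (n:ℝ) * (δ * (-Real.log r)) ≤ (n:ℝ) * C₀ :=
            mul_le_mul_of_nonneg_left hδC (Nat.cast_nonneg n)
          have t2 : Real.log ω * (-δ) ≤ C₀ / Real.log 2 * |Real.log ω| := by
            have s1 : Real.log ω * (-δ) ≤ |Real.log ω| * δ := by
              calc Real.log ω * (-δ) ≤ |Real.log ω * (-δ)| := le_abs_self _
                _ = |Real.log ω| * δ := by rw [abs_mul, abs_neg, abs_of_nonneg hδ0]
            calc Real.log ω * (-δ) ≤ |Real.log ω| * δ := s1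
              _ ≤ |Real.log ω| * (C₀ / Real.log 2) :=
                  mul_le_mul_of_nonneg_left hδlog2 (abs_nonneg _)
              _ = C₀ / Real.log 2 * |Real.log ω| := mul_comm _ _
          have e1 : ((n:ℝ) * Real.log r + Real.log ω) * (-δ)
              = (n:ℝ) * (δ * (-Real.log r)) + Real.log ω * (-δ) := by ring
          rw [e1]
          exact add_le_add t1 t2
        rw [hVexp, hlogV]
        refine le_trans (le_trans (Real.exp_le_exp.2 hbound) ?_)
          (le_trans (le_max_left K₁ Vmax) (le_max_right _ _))
        rw [hK₁def]
      · -- large ball regime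
        have hVlb : v₀ ≤ V := by
          rw [hVform, hv₀def]
          exact mul_le_mul_of_nonneg_right (pow_le_pow_left₀ (by norm_num) hr_half.le n) hω.le
        rcases le_total 1 V with hV1 | hV1
        · have h1 : V ^ (-δ) ≤ V ^ (0:ℝ) :=
            Real.rpow_le_rpow_of_exponent_le hV1 (neg_nonpos.2 hδ0)
          rw [Real.rpow_zero] at h1
          exact le_trans h1 (le_trans (le_max_left _ _) (le_max_left _ _))
        · have h1 : V ^ (-δ) ≤ V ^ (-1:ℝ) :=
            Real.rpow_le_rpow_of_exponent_ge hV0 hV1 (by linarith)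
          rw [Real.rpow_neg_one] at h1
          have h2 : V⁻¹ ≤ v₀⁻¹ := inv_anti₀ hv₀ hVlb
          exact le_trans h1 (le_trans h2
            (le_trans (le_max_right 1 v₀⁻¹) (le_max_left _ _)))
    -- exponent products equal to -1
    have hexp_b : -(1/b) * b = -1 := by field_simp
    have hexp_a : -(1/a) * a = -1 := by field_simp
    have hexp_a' : -(1 - 1/a) * (a/(a-1)) = -1 := by field_simp
    have hexp_b' : -(1 - 1/b) * (b/(b-1)) = -1 := by field_simp
    -- now the two cases on the size of m
    rcases le_total m 1 with hm1 | hm1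
    · -- small measure : use exponents 1/b and 1 - 1/a
      set l₁ := m ^ (1/b) with hl₁def
      have hl₁0 : 0 < l₁ := Real.rpow_pos_of_pos hm0 _
      have hc₁ : (1 : ℝ) / l₁ = m ^ (-(1/b)) := by
        rw [one_div, hl₁def, Real.rpow_neg hm0.le]
      have hc₁1 : 1 ≤ (1:ℝ)/l₁ := by
        rw [hc₁]
        exact Real.one_le_rpow_of_pos_of_le_one_of_nonpos hm0 hm1
          (neg_nonpos.2 (by positivity))
      have hmod₁ : (∫⁻ y in E, ENNReal.ofReal ((1/l₁) ^ (p y))) ≤ 1 := by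
        refine modular_le_one hEfin hE0 (Q := b) ?_ ?_
        · filter_upwards [hae_b] with y hy
          exact Real.rpow_le_rpow_of_exponent_le hc₁1 hy
        · rw [hc₁, ← Real.rpow_mul hm0.le, hexp_b, Real.rpow_neg_one, hmdef]
      have hlux₁ : luxNorm Ω p (Set.indicator E (fun _ => (1:ℝ))) ≤ l₁ :=
        luxNorm_indicator_le hEm hEΩ hq0p hl₁0 hmod₁
      set l₂ := m ^ (1 - 1/a) with hl₂def
      have hl₂0 : 0 < l₂ := Real.rpow_pos_of_pos hm0 _
      have hc₂ : (1 : ℝ) / l₂ = m ^ (-(1 - 1/a)) := by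
        rw [one_div, hl₂def, Real.rpow_neg hm0.le]
      have h1ainv : (0:ℝ) ≤ 1 - 1/a := by
        have : 1/a ≤ 1 := by rw [div_le_one (by linarith)]; linarith
        linarith
      have hc₂1 : 1 ≤ (1:ℝ)/l₂ := by
        rw [hc₂]
        exact Real.one_le_rpow_of_pos_of_le_one_of_nonpos hm0 hm1 (neg_nonpos.2 h1ainv)
      have hmod₂ : (∫⁻ y in E, ENNReal.ofReal ((1/l₂) ^ (dualExp p y))) ≤ 1 := by
        refine modular_le_one hEfin hE0 (Q := a/(a-1)) ?_ ?_
        · filter_upwards [hae_a, hgt1E] with y hy hy1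
          have hdual : dualExp p y ≤ a/(a-1) := by
            rw [dualExp, div_le_div_iff₀ (by linarith) (by linarith)]
            have e2 : p y * (a - 1) - a * (p y - 1) = a - p y := by ring
            linarith
          exact Real.rpow_le_rpow_of_exponent_le hc₂1 hdual
        · rw [hc₂, ← Real.rpow_mul hm0.le, hexp_a', Real.rpow_neg_one, hmdef]
      have hlux₂ : luxNorm Ω (dualExp p) (Set.indicator E (fun _ => (1:ℝ))) ≤ l₂ :=
        luxNorm_indicator_le hEm hEΩ hq0p' hl₂0 hmod₂
      calc V⁻¹ * luxNorm Ω p (Set.indicator E (fun _ => (1:ℝ)))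
            * luxNorm Ω (dualExp p) (Set.indicator E (fun _ => (1:ℝ)))
          ≤ V⁻¹ * l₁ * l₂ :=
            mul_le_mul (mul_le_mul_of_nonneg_left hlux₁ (inv_nonneg.2 hV0.le)) hlux₂
              (luxNorm_nonneg _ _ _) (by positivity)
        _ = V⁻¹ * m ^ (1/b + (1 - 1/a)) := by
            rw [mul_assoc, hl₁def, hl₂def, ← Real.rpow_add hm0]
        _ ≤ V⁻¹ * V ^ (1/b + (1 - 1/a)) := by
            have he : (0:ℝ) ≤ 1/b + (1 - 1/a) := by
              have : (0:ℝ) ≤ 1/b := by positivity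
              linarith
            exact mul_le_mul_of_nonneg_left
              (Real.rpow_le_rpow hm0.le hmV he) (inv_nonneg.2 hV0.le)
        _ = V ^ (-δ) := by
            rw [← Real.rpow_neg_one V, ← Real.rpow_add hV0]
            congr 1
            rw [hδdef]; ring
        _ ≤ max (max 1 v₀⁻¹) (max K₁ Vmax) := hVneg
    · -- large measure : use exponents 1/a and 1 - 1/b
      set l₁ := m ^ (1/a) with hl₁def
      have hl₁0 : 0 < l₁ := Real.rpow_pos_of_pos hm0 _
      have hc₁ : (1 : ℝ) / l₁ = m ^ (-(1/a)) := by
        rw [one_div, hl₁def, Real.rpow_neg hm0.le]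
      have hc₁0 : 0 < (1:ℝ)/l₁ := by positivity
      have hc₁1 : (1:ℝ)/l₁ ≤ 1 := by
        rw [hc₁]
        exact Real.rpow_le_one_of_one_le_of_nonpos hm1 (neg_nonpos.2 (by positivity))
      have hmod₁ : (∫⁻ y in E, ENNReal.ofReal ((1/l₁) ^ (p y))) ≤ 1 := by
        refine modular_le_one hEfin hE0 (Q := a) ?_ ?_
        · filter_upwards [hae_a] with y hy
          exact Real.rpow_le_rpow_of_exponent_ge hc₁0 hc₁1 hy
        · rw [hc₁, ← Real.rpow_mul hm0.le, hexp_a, Real.rpow_neg_one, hmdef]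
      have hlux₁ : luxNorm Ω p (Set.indicator E (fun _ => (1:ℝ))) ≤ l₁ :=
        luxNorm_indicator_le hEm hEΩ hq0p hl₁0 hmod₁
      set l₂ := m ^ (1 - 1/b) with hl₂def
      have hl₂0 : 0 < l₂ := Real.rpow_pos_of_pos hm0 _
      have hc₂ : (1 : ℝ) / l₂ = m ^ (-(1 - 1/b)) := by
        rw [one_div, hl₂def, Real.rpow_neg hm0.le]
      have h1binv : (0:ℝ) ≤ 1 - 1/b := by
        have : 1/b ≤ 1 := by rw [div_le_one (by linarith)]; linarith
        linarith
      have hc₂0 : 0 < (1:ℝ)/l₂ := by positivity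
      have hc₂1 : (1:ℝ)/l₂ ≤ 1 := by
        rw [hc₂]
        exact Real.rpow_le_one_of_one_le_of_nonpos hm1 (neg_nonpos.2 h1binv)
      have hmod₂ : (∫⁻ y in E, ENNReal.ofReal ((1/l₂) ^ (dualExp p y))) ≤ 1 := by
        refine modular_le_one hEfin hE0 (Q := b/(b-1)) ?_ ?_
        · filter_upwards [hae_b, hgt1E] with y hy hy1
          have hdual : b/(b-1) ≤ dualExp p y := by
            rw [dualExp, div_le_div_iff₀ (by linarith) (by linarith)]
            have e2 : b * (p y - 1) - p y * (b - 1) = p y - b := by ring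
            linarith
          exact Real.rpow_le_rpow_of_exponent_ge hc₂0 hc₂1 hdual
        · rw [hc₂, ← Real.rpow_mul hm0.le, hexp_b', Real.rpow_neg_one, hmdef]
      have hlux₂ : luxNorm Ω (dualExp p) (Set.indicator E (fun _ => (1:ℝ))) ≤ l₂ :=
        luxNorm_indicator_le hEm hEΩ hq0p' hl₂0 hmod₂
      have hV1 : (1:ℝ) ≤ V := le_trans hm1 hmV
      calc V⁻¹ * luxNorm Ω p (Set.indicator E (fun _ => (1:ℝ)))
            * luxNorm Ω (dualExp p) (Set.indicator E (fun _ => (1:ℝ)))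
          ≤ V⁻¹ * l₁ * l₂ :=
            mul_le_mul (mul_le_mul_of_nonneg_left hlux₁ (inv_nonneg.2 hV0.le)) hlux₂
              (luxNorm_nonneg _ _ _) (by positivity)
        _ = V⁻¹ * m ^ (1/a + (1 - 1/b)) := by
            rw [mul_assoc, hl₁def, hl₂def, ← Real.rpow_add hm0]
        _ ≤ V⁻¹ * V ^ (1/a + (1 - 1/b)) := by
            have he : (0:ℝ) ≤ 1/a + (1 - 1/b) := by
              have : (0:ℝ) ≤ 1/a := by positivity
              linarith
            exact mul_le_mul_of_nonneg_left
              (Real.rpow_le_rpow hm0.le hmV he) (inv_nonneg.2 hV0.le)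
        _ = V ^ (δ:ℝ) := by
            rw [← Real.rpow_neg_one V, ← Real.rpow_add hV0]
            congr 1
            rw [hδdef]; ring
        _ ≤ V ^ (1:ℝ) := Real.rpow_le_rpow_of_exponent_le hV1 hδ1
        _ = V := Real.rpow_one V
        _ ≤ Vmax := hVmax
        _ ≤ max (max 1 v₀⁻¹) (max K₁ Vmax) :=
            le_trans (le_max_right K₁ Vmax) (le_max_right _ _)
end
end

section
/- Let Ω ⊂ ℝⁿ be a bounded domain and let f: Ω → ℝ be uniformly ε₀-continuous on Ω for some ε₀ > 0. Then there exists an extension f̄: Ω̄ → ℝ of f to the closure of Ω such that: (1) f̄|_Ω = f; (2) for every ε > ε₀, f̄ is uniformly ε-continuous on Ω̄; and (3) inf_{Ω̄} f̄ = inf_Ω f and sup_{Ω̄} f̄ = sup_Ω f. -/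
open MeasureTheory Metric Set Filter Topology

noncomputable section

/-!
Send every point of `Ω̄` to a point of `Ω` at distance less than `δ / 3`, where `δ` is the modulus
of `ε₀`-continuity of `f`, and let `f̄` be `f` composed with this map. Two points of `Ω̄` closer than
`δ / 3` are sent to points of `Ω` closer than `δ`, so `f̄` is even uniformly `ε₀`-continuous, and
`f̄` takes on `Ω̄` exactly the values of `f` on `Ω`.
-/

section ClosurePointApproximation

variable {α : Type*} [PseudoMetricSpace α]

theorem exists_mapsTo_closure_dist_lt (s : Set α) {r : ℝ} (hr : 0 < r) :
    ∃ ρ : α → α, (∀ x ∈ s, ρ x = x) ∧ ∀ x ∈ closure s, ρ x ∈ s ∧ dist x (ρ x) < r := by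
  have hpoint : ∀ x, ∃ y, (x ∈ s → y = x) ∧ (x ∈ closure s → y ∈ s ∧ dist x y < r) := by
    intro x
    by_cases hxs : x ∈ s
    · exact ⟨x, fun _ => rfl, fun _ => ⟨hxs, by rwa [dist_self]⟩⟩
    by_cases hxc : x ∈ closure s
    · obtain ⟨y, hys, hxy⟩ := mem_closure_iff.mp hxc r hr
      exact ⟨y, fun h => absurd h hxs, fun _ => ⟨hys, hxy⟩⟩
    · exact ⟨x, fun _ => rfl, fun h => absurd h hxc⟩
  choose ρ hfix hnear using hpoint
  exact ⟨ρ, hfix, hnear⟩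

theorem abs_sub_comp_lt_of_dist_lt_third {s t : Set α} {f : α → ℝ} {ρ : α → α} {δ ε : ℝ}
    (hf : ∀ x ∈ s, ∀ y ∈ s, dist x y < δ → |f y - f x| < ε)
    (hρ : ∀ x ∈ t, ρ x ∈ s ∧ dist x (ρ x) < δ / 3) :
    ∀ x ∈ t, ∀ y ∈ t, dist x y < δ / 3 → |f (ρ y) - f (ρ x)| < ε := by
  intro x hx y hy hxy
  obtain ⟨hρx, hdx⟩ := hρ x hx
  obtain ⟨hρy, hdy⟩ := hρ y hy
  refine hf _ hρx _ hρy ?_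
  calc dist (ρ x) (ρ y) ≤ dist (ρ x) x + dist x y + dist y (ρ y) := dist_triangle4 _ _ _ _
    _ < δ / 3 + δ / 3 + δ / 3 := by rw [dist_comm (ρ x) x]; gcongr
    _ = δ := by ring

end ClosurePointApproximation

theorem extension_eps_continuous_general
    (n : ℕ) (Ω : Set (Eucl n))
    (f : Eucl n → ℝ) (ε₀ : ℝ) (hf : UnifEpsCont Ω f ε₀) :
    ∃ fbar : Eucl n → ℝ,
      (∀ x ∈ Ω, fbar x = f x) ∧
      (∀ ε : ℝ, ε₀ < ε → UnifEpsCont (closure Ω) fbar ε) ∧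
      sInf (fbar '' closure Ω) = sInf (f '' Ω) ∧
      sSup (fbar '' closure Ω) = sSup (f '' Ω) := by
  obtain ⟨δ, hδ, hδf⟩ := hf
  obtain ⟨ρ, hfix, hnear⟩ := exists_mapsTo_closure_dist_lt Ω (r := δ / 3) (by positivity)
  have hρ_image : ρ '' closure Ω = Ω :=
    Subset.antisymm (fun _ ⟨x, hx, hρx⟩ => hρx ▸ (hnear x hx).1)
      fun x hx => ⟨x, subset_closure hx, hfix x hx⟩
  have himage : (f ∘ ρ) '' closure Ω = f '' Ω := by rw [image_comp, hρ_image]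
  refine ⟨f ∘ ρ, fun x hx => congrArg f (hfix x hx), fun ε hε => ?_, by rw [himage],
    by rw [himage]⟩
  exact ⟨δ / 3, by positivity, fun x hx y hy hxy =>
    (abs_sub_comp_lt_of_dist_lt_third hδf hnear x hx y hy hxy).trans hε⟩

/-- Lemma 7.1, extension of uniformly ε-continuous functions to the closure. -/
theorem extension_eps_continuous
    (n : ℕ) (Ω : Set (Eucl n)) (hΩo : IsOpen Ω) (hΩc : IsConnected Ω)
    (hΩb : Bornology.IsBounded Ω)
    (f : Eucl n → ℝ) (ε₀ : ℝ) (hε₀ : 0 < ε₀) (hf : UnifEpsCont Ω f ε₀) :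
    ∃ fbar : Eucl n → ℝ,
      (∀ x ∈ Ω, fbar x = f x) ∧
      (∀ ε : ℝ, ε₀ < ε → UnifEpsCont (closure Ω) fbar ε) ∧
      sInf (fbar '' closure Ω) = sInf (f '' Ω) ∧
      sSup (fbar '' closure Ω) = sSup (f '' Ω) :=
  extension_eps_continuous_general n Ω f ε₀ hf
end
end

section
/- Let Ω ⊂ ℝⁿ be a boundary John domain with parameter λ > 1, and let p(·): Ω → [1,∞) satisfy 1 ≤ p_- ≤ p_+ < ∞ and the pointwise ∂LH_0^τ(Ω) condition for some τ > 2λ, i.e., there is C₀ > 0 such that sup_{B_{x,τ}∩Ω} p − inf_{B_{x,τ}∩Ω} p ≤ C₀/(−log(τ d(x))) for all x ∈ Ω with τ d(x) ≤ 1/2, where d(x) = dist(x, ∂Ω) and B_{x,τ} = B(x, τ d(x)). Then there is an extension p̄: Ω̄ → ℝ of p such that: (1) for every x ∈ ∂Ω and every sequence {x_k} ⊂ Ω with x_k → x and |x_k − x| ≤ λ d(x_k) for all k, one has p(x_k) → p̄(x); and (2) there is a constant C such that |p̄(x) − p̄(y)| ≤ C/(−log|x − y|) for all x, y ∈ ∂Ω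 with |x − y| < 1/2. -/
open MeasureTheory Metric Set Filter Topology

noncomputable section

/-- `Ω` is a John domain up to the boundary (Definition 8.1). -/
def BoundaryJohnDomain {n : ℕ} (Ω : Set (Eucl n)) (lam : ℝ) : Prop :=
  ∃ x₀ ∈ Ω, ∀ y ∈ closure Ω, ∃ ℓ : ℝ, 0 ≤ ℓ ∧ ∃ γ : ℝ → Eucl n,
    γ 0 = y ∧ γ ℓ = x₀ ∧ (∀ t ∈ Ioc (0:ℝ) ℓ, γ t ∈ Ω) ∧
    LipschitzOnWith 1 γ (Icc (0:ℝ) ℓ) ∧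
    ∀ t ∈ Icc (0:ℝ) ℓ, t ≤ lam * infDist (γ t) (frontier Ω)


/-! ### Auxiliary lemmas for Statement 19 -/

lemma blh_bdist_pos {n : ℕ} {Ω : Set (Eucl n)} (hΩo : IsOpen Ω)
    (hfr : (frontier Ω).Nonempty) {z : Eucl n} (hz : z ∈ Ω) : 0 < bdist Ω z := by
  refine (isClosed_frontier.notMem_iff_infDist_pos hfr).mp ?_
  intro h
  rw [hΩo.frontier_eq] at h
  exact h.2 hz

lemma blh_neg_log_pos {b : ℝ} (hb : 0 < b) (hb2 : b ≤ 1/2) : 0 < -Real.log b := by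
  have := Real.log_neg hb (lt_of_le_of_lt hb2 (by norm_num))
  linarith

lemma blh_div_neg_log_mono {C₀ a b : ℝ} (hC : 0 < C₀) (ha : 0 < a) (hab : a ≤ b)
    (hb : b ≤ 1/2) : C₀ / (-Real.log a) ≤ C₀ / (-Real.log b) := by
  have hbpos : 0 < -Real.log b := blh_neg_log_pos (ha.trans_le hab) hb
  have hlog : Real.log a ≤ Real.log b := Real.log_le_log ha hab
  exact div_le_div_of_nonneg_left hC.le hbpos (by linarith)

/-- Nontangential approach region. -/
def blhA {n : ℕ} (Ω : Set (Eucl n)) (lam : ℝ) (x : Eucl n) : Set (Eucl n) :=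
  {z | z ∈ Ω ∧ dist z x ≤ lam * bdist Ω z}

/-- Boundary value function. -/
def blhQ {n : ℕ} (Ω : Set (Eucl n)) (lam : ℝ) (p : Eucl n → ℝ) (x : Eucl n) : ℝ :=
  sInf ((fun r => sSup (p '' (blhA Ω lam x ∩ ball x r))) '' Ioi (0:ℝ))

set_option maxHeartbeats 1600000 in
/-- Proposition 8.2, boundary log-Hölder continuous extension
to the boundary of a boundary John domain. -/
theorem boundaryLH_extension_to_boundary
    (n : ℕ) (Ω : Set (Eucl n)) (hΩo : IsOpen Ω) (hΩc : IsConnected Ω)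
    (hΩb : Bornology.IsBounded Ω)
    (lam : ℝ) (hlam : 1 < lam) (hJohn : BoundaryJohnDomain Ω lam)
    (τ : ℝ) (hτ : 2 * lam < τ)
    (p : Eucl n → ℝ) (hp1 : ∀ x ∈ Ω, 1 ≤ p x)
    (hpb : ∃ M : ℝ, ∀ x ∈ Ω, p x ≤ M)
    (C₀ : ℝ) (hC₀ : 0 < C₀)
    (hLH : ∀ x ∈ Ω, τ * bdist Ω x ≤ 1 / 2 →
      sSup (p '' (ballB Ω τ x ∩ Ω)) - sInf (p '' (ballB Ω τ x ∩ Ω))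
        ≤ C₀ / (-Real.log (τ * bdist Ω x))) :
    ∃ pbar : Eucl n → ℝ,
      (∀ x ∈ Ω, pbar x = p x) ∧
      (∀ x ∈ frontier Ω, ∀ xk : ℕ → Eucl n,
        (∀ k, xk k ∈ Ω) → Tendsto xk atTop (𝓝 x) →
        (∀ k, dist (xk k) x ≤ lam * bdist Ω (xk k)) →
        Tendsto (fun k => p (xk k)) atTop (𝓝 (pbar x))) ∧
      (∃ C : ℝ, ∀ x ∈ frontier Ω, ∀ y ∈ frontier Ω, dist x y < 1 / 2 →
        |pbar x - pbar y| ≤ C / (-Real.log (dist x y))) := by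
  classical
  rcases eq_empty_or_nonempty (frontier Ω) with hfr | hfr
  · refine ⟨p, fun x _ => rfl, ?_, 0, ?_⟩
    · intro x hx; rw [hfr] at hx; exact absurd hx (notMem_empty x)
    · intro x hx; rw [hfr] at hx; exact absurd hx (notMem_empty x)
  obtain ⟨M, hM⟩ := hpb
  obtain ⟨x₀, hx₀Ω, hcurve⟩ := hJohn
  have hlam0 : 0 < lam := lt_trans one_pos hlam
  have hτ0 : 0 < τ := by linarith
  have hd₀ : 0 < bdist Ω x₀ := blh_bdist_pos hΩo hfr hx₀Ω
  set d₀ : ℝ := bdist Ω x₀ with hd₀def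
  have hM1 : 1 ≤ M := le_trans (hp1 x₀ hx₀Ω) (hM x₀ hx₀Ω)
  -- core oscillation estimate from the hypothesis hLH
  have hOsc : ∀ z ∈ Ω, ∀ w ∈ Ω, dist w z < τ * bdist Ω z → τ * bdist Ω z ≤ 1/2 →
      |p z - p w| ≤ C₀ / (-Real.log (τ * bdist Ω z)) := by
    intro z hz w hw hdw hsmall
    have hzb : 0 < bdist Ω z := blh_bdist_pos hΩo hfr hz
    have hsetz : z ∈ ballB Ω τ z ∩ Ω := ⟨mem_ball_self (mul_pos hτ0 hzb), hz⟩
    have hsetw : w ∈ ballB Ω τ z ∩ Ω := ⟨mem_ball.mpr hdw, hw⟩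
    have hbddA : BddAbove (p '' (ballB Ω τ z ∩ Ω)) :=
      ⟨M, by rintro _ ⟨u, hu, rfl⟩; exact hM u hu.2⟩
    have hbddB : BddBelow (p '' (ballB Ω τ z ∩ Ω)) :=
      ⟨1, by rintro _ ⟨u, hu, rfl⟩; exact hp1 u hu.2⟩
    have h1 : p z ≤ sSup (p '' (ballB Ω τ z ∩ Ω)) := le_csSup hbddA (mem_image_of_mem _ hsetz)
    have h2 : p w ≤ sSup (p '' (ballB Ω τ z ∩ Ω)) := le_csSup hbddA (mem_image_of_mem _ hsetw)
    have h3 : sInf (p '' (ballB Ω τ z ∩ Ω)) ≤ p z := csInf_le hbddB (mem_image_of_mem _ hsetz)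
    have h4 : sInf (p '' (ballB Ω τ z ∩ Ω)) ≤ p w := csInf_le hbddB (mem_image_of_mem _ hsetw)
    have hmain := hLH z hz hsmall
    rw [abs_sub_le_iff]
    constructor <;> linarith
  -- points on John curves
  have key : ∀ x ∈ frontier Ω, ∀ s : ℝ, 0 < s → s ≤ d₀ →
      ∃ z ∈ Ω, dist z x ≤ s ∧ dist z x ≤ lam * bdist Ω z ∧ s ≤ lam * bdist Ω z := by
    intro x hx s hs hsd
    obtain ⟨ℓ, hℓ0, γ, hγ0, hγℓ, hγΩ, hγlip, hγd⟩ := hcurve x (frontier_subset_closure hx)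
    have hxnΩ : x ∉ Ω := by rw [hΩo.frontier_eq] at hx; exact hx.2
    have hℓpos : 0 < ℓ := by
      rcases hℓ0.lt_or_eq with h | h
      · exact h
      · exfalso; apply hxnΩ; rw [← hγ0, h, hγℓ]; exact hx₀Ω
    have hsℓ : s ≤ ℓ := by
      have h1 : d₀ ≤ dist x₀ x := infDist_le_dist_of_mem hx
      have h2 : dist x₀ x ≤ ℓ := by
        have h := hγlip.dist_le_mul ℓ ⟨hℓ0, le_rfl⟩ 0 ⟨le_rfl, hℓ0⟩
        rw [hγ0, hγℓ] at h
        simpa [Real.dist_eq, abs_of_nonneg hℓ0] using h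
      linarith
    have hsIcc : s ∈ Icc (0:ℝ) ℓ := ⟨hs.le, hsℓ⟩
    have hdist : dist (γ s) x ≤ s := by
      have h := hγlip.dist_le_mul s hsIcc 0 ⟨le_rfl, hℓ0⟩
      rw [hγ0] at h
      simpa [Real.dist_eq, abs_of_nonneg hs.le] using h
    have hγds : s ≤ lam * bdist Ω (γ s) := hγd s hsIcc
    exact ⟨γ s, hγΩ s ⟨hs, hsℓ⟩, hdist, le_trans hdist hγds, hγds⟩
  -- oscillation on the nontangential approach region
  have hOscA : ∀ x ∈ frontier Ω, ∀ r : ℝ, 0 < r → τ * r ≤ 1/2 →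
      ∀ z, (z ∈ Ω ∧ dist z x ≤ lam * bdist Ω z) → dist z x < r →
      ∀ w, (w ∈ Ω ∧ dist w x ≤ lam * bdist Ω w) → dist w x < r →
      |p z - p w| ≤ C₀ / (-Real.log (τ * r)) := by
    have main : ∀ x ∈ frontier Ω, ∀ r : ℝ, 0 < r → τ * r ≤ 1/2 →
        ∀ z, (z ∈ Ω ∧ dist z x ≤ lam * bdist Ω z) → dist z x < r →
        ∀ w, (w ∈ Ω ∧ dist w x ≤ lam * bdist Ω w) → dist w x < r →
        bdist Ω w ≤ bdist Ω z →
        |p z - p w| ≤ C₀ / (-Real.log (τ * r)) := by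
      intro x hx r hr hr2 z hzA hzr w hwA hwr hbw
      obtain ⟨hzΩ, hzd⟩ := hzA
      obtain ⟨hwΩ, hwd⟩ := hwA
      have hzb : 0 < bdist Ω z := blh_bdist_pos hΩo hfr hzΩ
      have hwb : 0 < bdist Ω w := blh_bdist_pos hΩo hfr hwΩ
      have hble : bdist Ω z ≤ dist z x := infDist_le_dist_of_mem hx
      have hdzw : dist w z < τ * bdist Ω z := by
        have h0 : dist w z ≤ dist w x + dist x z := dist_triangle w x z
        have h1 : dist x z = dist z x := dist_comm x z
        nlinarith
      have hsmall : τ * bdist Ω z ≤ 1/2 := by nlinarith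
      refine (hOsc z hzΩ w hwΩ hdzw hsmall).trans ?_
      exact blh_div_neg_log_mono hC₀ (mul_pos hτ0 hzb) (by nlinarith) hr2
    intro x hx r hr hr2 z hzA hzr w hwA hwr
    rcases le_total (bdist Ω w) (bdist Ω z) with h | h
    · exact main x hx r hr hr2 z hzA hzr w hwA hwr h
    · rw [abs_sub_comm]; exact main x hx r hr hr2 w hwA hwr z hzA hzr h
  -- the boundary value function
  have hAmem : ∀ (x z : Eucl n), z ∈ blhA Ω lam x ↔ (z ∈ Ω ∧ dist z x ≤ lam * bdist Ω z) :=
    fun x z => Iff.rfl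
  set A : Eucl n → Set (Eucl n) := blhA Ω lam with hA
  set q : Eucl n → ℝ := blhQ Ω lam p with hqdef
  have hqeq : ∀ x : Eucl n,
      q x = sInf ((fun r => sSup (p '' (A x ∩ ball x r))) '' Ioi (0:ℝ)) :=
    fun x => rfl
  have hsub : ∀ (x : Eucl n), ∀ r : ℝ, A x ∩ ball x r ⊆ Ω := fun x r u hu => hu.1.1
  have hbddA : ∀ (B : Set (Eucl n)), B ⊆ Ω → BddAbove (p '' B) :=
    fun B hB => ⟨M, by rintro _ ⟨u, hu, rfl⟩; exact hM u (hB hu)⟩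
  have hAne : ∀ x ∈ frontier Ω, ∀ r : ℝ, 0 < r → (A x ∩ ball x r).Nonempty := by
    intro x hx r hr
    obtain ⟨z, hzΩ, hd1, hd2, _⟩ := key x hx (min (r/2) d₀)
      (lt_min (half_pos hr) hd₀) (min_le_right _ _)
    refine ⟨z, ⟨hzΩ, hd2⟩, mem_ball.mpr ?_⟩
    have h := min_le_left (r/2) d₀
    linarith
  have hSne : ∀ (x : Eucl n),
      ((fun r => sSup (p '' (A x ∩ ball x r))) '' Ioi (0:ℝ)).Nonempty :=
    fun x => ⟨_, mem_image_of_mem _ (mem_Ioi.mpr one_pos)⟩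
  have hSbdd : ∀ x ∈ frontier Ω,
      (1:ℝ) ∈ lowerBounds ((fun r => sSup (p '' (A x ∩ ball x r))) '' Ioi (0:ℝ)) := by
    rintro x hx _ ⟨r, hr, rfl⟩
    obtain ⟨z, hz⟩ := hAne x hx r (mem_Ioi.mp hr)
    exact le_trans (hp1 z hz.1.1) (le_csSup (hbddA _ (hsub x r)) (mem_image_of_mem _ hz))
  -- key approximation estimate
  have hE : ∀ x ∈ frontier Ω, ∀ r : ℝ, 0 < r → τ * r ≤ 1/2 →
      ∀ z ∈ A x ∩ ball x r, |q x - p z| ≤ C₀ / (-Real.log (τ * r)) := by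
    intro x hx r hr hr2 z hz
    have hub : q x ≤ p z + C₀ / (-Real.log (τ * r)) := by
      refine le_trans (csInf_le ⟨1, hSbdd x hx⟩ (mem_image_of_mem _ (mem_Ioi.mpr hr))) ?_
      refine csSup_le ⟨p z, mem_image_of_mem _ hz⟩ ?_
      rintro _ ⟨w, hw, rfl⟩
      have hosc := hOscA x hx r hr hr2 w hw.1 (mem_ball.mp hw.2) z hz.1 (mem_ball.mp hz.2)
      linarith [(abs_sub_le_iff.mp hosc).1]
    have hlb : p z - C₀ / (-Real.log (τ * r)) ≤ q x := by
      refine le_csInf (hSne x) ?_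
      rintro _ ⟨r', hr', rfl⟩
      obtain ⟨z', hz'⟩ := hAne x hx (min r r') (lt_min hr (mem_Ioi.mp hr'))
      have hz'ball := mem_ball.mp hz'.2
      have hz'r' : z' ∈ A x ∩ ball x r' :=
        ⟨hz'.1, mem_ball.mpr (lt_of_lt_of_le hz'ball (min_le_right _ _))⟩
      have hosc := hOscA x hx r hr hr2 z hz.1 (mem_ball.mp hz.2) z' hz'.1
        (lt_of_lt_of_le hz'ball (min_le_left _ _))
      have h1 : p z' ≤ sSup (p '' (A x ∩ ball x r')) :=
        le_csSup (hbddA _ (hsub x r')) (mem_image_of_mem _ hz'r')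
      linarith [(abs_sub_le_iff.mp hosc).1]
    rw [abs_sub_le_iff]
    constructor <;> linarith
  have hq1 : ∀ x ∈ frontier Ω, 1 ≤ q x := fun x hx => le_csInf (hSne x) (hSbdd x hx)
  have hqM : ∀ x ∈ frontier Ω, q x ≤ M := by
    intro x hx
    refine le_trans (csInf_le ⟨1, hSbdd x hx⟩ (mem_image_of_mem _ (mem_Ioi.mpr one_pos))) ?_
    obtain ⟨z, hz⟩ := hAne x hx 1 one_pos
    refine csSup_le ⟨p z, mem_image_of_mem _ hz⟩ ?_
    rintro _ ⟨w, hw, rfl⟩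
    exact hM w hw.1.1
  clear_value A q
  -- choosing a small radius with small modulus
  have hsmallr : ∀ ε : ℝ, 0 < ε → ∃ r : ℝ, 0 < r ∧ τ * r ≤ 1/2 ∧
      C₀ / (-Real.log (τ * r)) < ε := by
    intro ε hε
    set u : ℝ := min (1/2) (Real.exp (-(C₀/ε + 1))) with hu
    have hu0 : 0 < u := lt_min one_half_pos (Real.exp_pos _)
    have huτ : τ * (u / τ) = u := by field_simp
    refine ⟨u / τ, div_pos hu0 hτ0, ?_, ?_⟩
    · rw [huτ]; exact min_le_left _ _
    · rw [huτ]
      have hlog : C₀/ε + 1 ≤ -Real.log u := by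
        have h := Real.log_le_log hu0 (min_le_right (1/2) (Real.exp (-(C₀/ε + 1))))
        rw [Real.log_exp] at h
        linarith
      have hpos : (0:ℝ) < C₀/ε + 1 := by positivity
      have h1 : C₀ / (-Real.log u) ≤ C₀ / (C₀/ε + 1) :=
        div_le_div_of_nonneg_left hC₀.le hpos hlog
      have h2 : C₀ / (C₀/ε + 1) < ε := by
        rw [div_lt_iff₀ hpos]
        have h3 : ε * (C₀/ε) = C₀ := by field_simp
        nlinarith
      linarith
  -- the extension
  refine ⟨fun x => if x ∈ Ω then p x else q x, fun x hx => if_pos hx, ?_, ?_⟩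
  · -- nontangential convergence
    intro x hx xk hxkΩ hxk hxkA
    have hxnΩ : x ∉ Ω := by rw [hΩo.frontier_eq] at hx; exact hx.2
    simp only [if_neg hxnΩ]
    rw [Metric.tendsto_atTop]
    intro ε hε
    obtain ⟨r, hr0, hr2, hrε⟩ := hsmallr ε hε
    obtain ⟨N, hN⟩ := Metric.tendsto_atTop.mp hxk r hr0
    refine ⟨N, fun k hk => ?_⟩
    have hmem : xk k ∈ A x ∩ ball x r :=
      ⟨(hAmem x (xk k)).mpr ⟨hxkΩ k, hxkA k⟩, mem_ball.mpr (hN k hk)⟩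
    have h := hE x hx r hr0 hr2 (xk k) hmem
    rw [Real.dist_eq, abs_sub_comm]
    exact lt_of_le_of_lt h hrε
  · -- boundary log-Hölder continuity
    have hτ2 : 0 < τ - 2*lam := by linarith
    set K : ℝ := 2*lam/(τ - 2*lam) + 1 with hKdef
    clear_value K
    have hK0 : 0 < K := by
      rw [hKdef]
      have h := div_pos (by linarith : (0:ℝ) < 2*lam) hτ2
      linarith
    set B : ℝ := 2 * τ * K with hBdef
    clear_value B
    have hB0 : 0 < B := by
      rw [hBdef]
      have h := mul_pos hτ0 hK0
      nlinarith
    set L : ℝ := max (Real.log B) 1 with hLdef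
    clear_value L
    have hL1 : 1 ≤ L := by rw [hLdef]; exact le_max_right _ _
    have hLB : Real.log B ≤ L := by rw [hLdef]; exact le_max_left _ _
    set ρ₂ : ℝ := min (Real.exp (-(2*L))) (d₀ / K) with hρ₂def
    clear_value ρ₂
    have hρ₂exp : ρ₂ ≤ Real.exp (-(2*L)) := by rw [hρ₂def]; exact min_le_left _ _
    have hρ₂d : ρ₂ ≤ d₀ / K := by rw [hρ₂def]; exact min_le_right _ _
    have hρ₂0 : 0 < ρ₂ := by
      rw [hρ₂def]; exact lt_min (Real.exp_pos _) (div_pos hd₀ hK0)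
    have hρ₂log0 : 0 < -Real.log ρ₂ := by
      have h := Real.log_le_log hρ₂0 hρ₂exp
      rw [Real.log_exp] at h
      linarith
    refine ⟨max (6*C₀) (M * (-Real.log ρ₂)), ?_⟩
    intro x hx y hy hxyhalf
    have hxnΩ : x ∉ Ω := by rw [hΩo.frontier_eq] at hx; exact hx.2
    have hynΩ : y ∉ Ω := by rw [hΩo.frontier_eq] at hy; exact hy.2
    simp only [if_neg hxnΩ, if_neg hynΩ]
    rcases (dist_nonneg : (0:ℝ) ≤ dist x y).lt_or_eq with hρ0 | hρ0
    swap
    · have hxy : x = y := by rw [← dist_eq_zero, ← hρ0]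
      subst hxy
      simp
    set ρ : ℝ := dist x y with hρdef
    clear_value ρ
    have hlogρ0 : 0 < -Real.log ρ := blh_neg_log_pos hρ0 hxyhalf.le
    rcases le_or_gt ρ ρ₂ with hcase | hcase
    · -- small distance case
      set s : ℝ := K * ρ with hsdef
      clear_value s
      have hs0 : 0 < s := by rw [hsdef]; exact mul_pos hK0 hρ0
      have hρexp : ρ ≤ Real.exp (-(2*L)) := le_trans hcase hρ₂exp
      have hlogρ : Real.log ρ ≤ -(2*L) := by
        have h := Real.log_le_log hρ0 hρexp
        rwa [Real.log_exp] at h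
      have hBρ : B * ρ ≤ Real.exp (-1 : ℝ) := by
        have h1 : B * ρ ≤ B * Real.exp (-(2*L)) := mul_le_mul_of_nonneg_left hρexp hB0.le
        have h2 : Real.exp (-(2*L)) ≤ Real.exp (-(Real.log B + 1)) :=
          Real.exp_le_exp.mpr (by linarith)
        have h3 : B * Real.exp (-(Real.log B + 1)) = Real.exp (-1 : ℝ) := by
          rw [neg_add, Real.exp_add, Real.exp_neg, Real.exp_log hB0]
          field_simp
        nlinarith [Real.exp_pos (-(Real.log B + 1)), Real.exp_pos (-(2*L))]
      have hexp1 : Real.exp (-1 : ℝ) ≤ 1/2 := by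
        have h2e : (2:ℝ) ≤ Real.exp 1 := by
          have h := Real.add_one_le_exp (1:ℝ)
          linarith
        rw [Real.exp_neg, inv_le_comm₀ (Real.exp_pos 1) (by norm_num)]
        linarith
      have hBρhalf : B * ρ ≤ 1/2 := le_trans hBρ hexp1
      have hid : τ * (2*s) = B * ρ := by rw [hsdef, hBdef]; ring
      have hsd₀ : s ≤ d₀ := by
        have h1 : ρ ≤ d₀ / K := le_trans hcase hρ₂d
        rw [hsdef]
        calc K * ρ ≤ K * (d₀ / K) := mul_le_mul_of_nonneg_left h1 hK0.le
          _ = d₀ := by field_simp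
      obtain ⟨z, hzΩ, hzd, hzA, hzs⟩ := key x hx s hs0 hsd₀
      obtain ⟨w, hwΩ, hwd, hwA, hws⟩ := key y hy s hs0 hsd₀
      have h2s0 : 0 < 2*s := by linarith
      have h2s : τ * (2*s) ≤ 1/2 := by rw [hid]; exact hBρhalf
      have hEx := hE x hx (2*s) h2s0 h2s z
        ⟨(hAmem x z).mpr ⟨hzΩ, hzA⟩, mem_ball.mpr (by linarith)⟩
      have hEy := hE y hy (2*s) h2s0 h2s w
        ⟨(hAmem y w).mpr ⟨hwΩ, hwA⟩, mem_ball.mpr (by linarith)⟩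
      have hzb : 0 < bdist Ω z := blh_bdist_pos hΩo hfr hzΩ
      have hbz_ub : bdist Ω z ≤ s := le_trans (infDist_le_dist_of_mem hx) hzd
      have hKeyid : (τ - 2*lam) * s = τ * ρ := by
        rw [hsdef, hKdef]
        field_simp
        ring
      have hdzw : dist w z < τ * bdist Ω z := by
        have h3 : dist w z ≤ dist w y + dist y x + dist x z := dist_triangle4 w y x z
        have h4 : dist y x = ρ := by rw [dist_comm, ← hρdef]
        have h5 : dist x z = dist z x := dist_comm x z
        have h6 : lam * (2*s + ρ) < τ * s := by
          have hh : lam * ρ < τ * ρ := mul_lt_mul_of_pos_right (by linarith) hρ0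
          linarith [hKeyid]
        have h7 : τ * s ≤ lam * (τ * bdist Ω z) := by
          have hh := mul_le_mul_of_nonneg_left hzs hτ0.le
          linarith
        have h8 : 2*s + ρ < τ * bdist Ω z :=
          lt_of_mul_lt_mul_left (lt_of_lt_of_le h6 h7) hlam0.le
        linarith
      have hbub := mul_le_mul_of_nonneg_left hbz_ub hτ0.le
      have hsmallz : τ * bdist Ω z ≤ 1/2 := by linarith
      have hmid := hOsc z hzΩ w hwΩ hdzw hsmallz
      have hmid2 : |p z - p w| ≤ C₀ / (-Real.log (τ * (2*s))) :=
        hmid.trans (blh_div_neg_log_mono hC₀ (mul_pos hτ0 hzb)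
          (by linarith [mul_pos hτ0 hs0]) h2s)
      have htot : |q x - q y| ≤ 3 * (C₀ / (-Real.log (B * ρ))) := by
        rw [← hid]
        have t1 : |q x - q y| ≤ |q x - p z| + |p z - q y| := abs_sub_le _ _ _
        have t2 : |p z - q y| ≤ |p z - p w| + |p w - q y| := abs_sub_le _ _ _
        have t3 : |p w - q y| = |q y - p w| := abs_sub_comm _ _
        have t5 := hEy
        rw [← t3] at t5
        linarith [hEx]
      have hlogB : (-Real.log ρ)/2 ≤ -Real.log (B*ρ) := by
        rw [Real.log_mul hB0.ne' hρ0.ne']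
        have h2L : 2*L ≤ -Real.log ρ := by linarith
        linarith
      have hBρpos : 0 < -Real.log (B*ρ) := lt_of_lt_of_le (by linarith) hlogB
      have hfinal : 3 * (C₀ / (-Real.log (B*ρ))) ≤ 6*C₀ / (-Real.log ρ) := by
        have h1 : C₀ / (-Real.log (B*ρ)) ≤ C₀ / ((-Real.log ρ)/2) :=
          div_le_div_of_nonneg_left hC₀.le (by linarith) hlogB
        have h2 : 3 * (C₀ / ((-Real.log ρ)/2)) = 6*C₀ / (-Real.log ρ) := by
          rw [div_div_eq_mul_div]
          ring
        linarith
      have hle : 6*C₀ / (-Real.log ρ) ≤ max (6*C₀) (M * (-Real.log ρ₂)) / (-Real.log ρ) := by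
        apply div_le_div_of_nonneg_right (le_max_left _ _) hlogρ0.le
      linarith
    · -- large distance case
      have habs : |q x - q y| ≤ M - 1 := by
        rw [abs_sub_le_iff]
        constructor <;> linarith [hq1 x hx, hqM x hx, hq1 y hy, hqM y hy]
      have hlogρ₂ : -Real.log ρ ≤ -Real.log ρ₂ := by
        have h := Real.log_le_log hρ₂0 hcase.le
        linarith
      rw [le_div_iff₀ hlogρ0]
      have h1 : |q x - q y| * (-Real.log ρ) ≤ (M-1) * (-Real.log ρ₂) := by
        have h := mul_le_mul habs hlogρ₂ hlogρ0.le (by linarith)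
        linarith
      have h2 : (M-1) * (-Real.log ρ₂) ≤ M * (-Real.log ρ₂) := by nlinarith
      have h3 : M * (-Real.log ρ₂) ≤ max (6*C₀) (M * (-Real.log ρ₂)) := le_max_right _ _
      linarith
end
end
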